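/- arXiv:1402.3361 — 9 statements merged into one kernel-verified Lean document; each statement's English description precedes it below -/
import Mathlib

section
/- Let S be a commutative ring, R an associative S-algebra, A, B ∈ R, C := AB − BA, and define P(m,ℓ) := A^m C A^ℓ + A^ℓ C A^m and Q(m,ℓ) := A^m B A^ℓ − A^ℓ B A^m. Suppose that for scalars α_1, …, α_{L+1}, δ, ε, β ∈ S one has AC − CA = Σ_{i=1}^{L+1} α_i A^i + δ·B + ε·1 + β·(AB + BA). Then for all m ≥ 0 and ℓ ≥ 1, P(m,ℓ) = P(m+1, ℓ−1) − δ·Q(m, ℓ−1) − β·Q(m+1, ℓ−1) − β·Q(m,ℓ). -/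
/-- With `P(m,ℓ) = A^m C A^ℓ + A^ℓ C A^m` and `Q(m,ℓ) = A^m B A^ℓ - A^ℓ B A^m`,
assuming `[A,C] = Σ_{i=1}^{L+1} α_i A^i + δ B + ε 1 + β (AB + BA)`, for all `m ≥ 0`, `ℓ ≥ 1`:
`P(m,ℓ) = P(m+1,ℓ-1) - δ Q(m,ℓ-1) - β Q(m+1,ℓ-1) - β Q(m,ℓ)`. -/
theorem stmt3 {S R : Type*} [CommRing S] [Ring R] [Algebra S R]
    (A B C : R) (hC : C = A * B - B * A) (L : ℕ) (α : ℕ → S) (δ ε β : S)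
    (hrel : A * C - C * A =
      ∑ i ∈ Finset.Icc 1 (L + 1), α i • A ^ i + δ • B + ε • (1 : R) + β • (A * B + B * A))
    (m ℓ : ℕ) (hℓ : 1 ≤ ℓ) :
    A ^ m * C * A ^ ℓ + A ^ ℓ * C * A ^ m =
      (A ^ (m + 1) * C * A ^ (ℓ - 1) + A ^ (ℓ - 1) * C * A ^ (m + 1))
        - δ • (A ^ m * B * A ^ (ℓ - 1) - A ^ (ℓ - 1) * B * A ^ m)
        - β • (A ^ (m + 1) * B * A ^ (ℓ - 1) - A ^ (ℓ - 1) * B * A ^ (m + 1))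
        - β • (A ^ m * B * A ^ ℓ - A ^ ℓ * B * A ^ m) := by
  obtain ⟨k, rfl⟩ : ∃ k, ℓ = k + 1 := ⟨ℓ - 1, (Nat.succ_pred_eq_of_pos hℓ).symm⟩
  simp only [Nat.add_sub_cancel]
  have main : A ^ k * (A * C - C * A) * A ^ m - A ^ m * (A * C - C * A) * A ^ k
      = - δ • (A ^ m * B * A ^ k - A ^ k * B * A ^ m)
        - β • (A ^ (m + 1) * B * A ^ k - A ^ k * B * A ^ (m + 1))
        - β • (A ^ m * B * A ^ (k + 1) - A ^ (k + 1) * B * A ^ m) := by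
    rw [hrel]
    have hsum : ∀ n p : ℕ, A ^ n * (∑ i ∈ Finset.Icc 1 (L + 1), α i • A ^ i) * A ^ p
        = ∑ i ∈ Finset.Icc 1 (L + 1), α i • A ^ (n + i + p) := by
      intro n p
      simp only [Finset.mul_sum, Finset.sum_mul, mul_smul_comm, smul_mul_assoc]
      refine Finset.sum_congr rfl fun i _ => ?_
      rw [← pow_add, ← pow_add]
    simp only [mul_add, add_mul, hsum]
    have hswap : ∀ i ∈ Finset.Icc 1 (L + 1),
        α i • A ^ (k + i + m) = α i • A ^ (m + i + k) := by
      intro i _; rw [show k + i + m = m + i + k by omega]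
    rw [Finset.sum_congr rfl hswap]
    have e1 : A ^ k * (ε • (1:R)) * A ^ m = ε • A ^ (k + m) := by
      rw [mul_smul_comm, smul_mul_assoc, mul_one, ← pow_add]
    have e2 : A ^ m * (ε • (1:R)) * A ^ k = ε • A ^ (m + k) := by
      rw [mul_smul_comm, smul_mul_assoc, mul_one, ← pow_add]
    rw [e1, e2, add_comm k m]
    have e3 : ∀ n p : ℕ, A ^ n * (δ • B) * A ^ p = δ • (A ^ n * B * A ^ p) := by
      intro n p; rw [mul_smul_comm, smul_mul_assoc]
    have e4 : ∀ n p : ℕ, A ^ n * (β • (A * B + B * A)) * A ^ p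
        = β • (A ^ (n + 1) * B * A ^ p + A ^ n * B * A ^ (p + 1)) := by
      intro n p
      rw [mul_smul_comm, smul_mul_assoc]
      congr 1
      rw [mul_add, add_mul, pow_succ, pow_succ']
      noncomm_ring
    simp only [e3, e4]
    module
  have lhsdiff : (A ^ m * C * A ^ (k + 1) + A ^ (k + 1) * C * A ^ m)
      - (A ^ (m + 1) * C * A ^ k + A ^ k * C * A ^ (m + 1))
      = A ^ k * (A * C - C * A) * A ^ m - A ^ m * (A * C - C * A) * A ^ k := by
    have p1 : A ^ (m + 1) * C * A ^ k = A ^ m * (A * C) * A ^ k := by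
      rw [pow_succ, mul_assoc (A ^ m) A C]
    have p2 : A ^ m * C * A ^ (k + 1) = A ^ m * (C * A) * A ^ k := by
      rw [pow_succ', ← mul_assoc, mul_assoc (A ^ m) C A]
    have p3 : A ^ (k + 1) * C * A ^ m = A ^ k * (A * C) * A ^ m := by
      rw [pow_succ, mul_assoc (A ^ k) A C]
    have p4 : A ^ k * C * A ^ (m + 1) = A ^ k * (C * A) * A ^ m := by
      rw [pow_succ', ← mul_assoc, mul_assoc (A ^ k) C A]
    rw [p1, p2, p3, p4]
    noncomm_ring
  have final := lhsdiff.trans main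
  rw [sub_eq_iff_eq_add] at final
  rw [final]
  module
end

section
/- Let S be a commutative ring, R an associative S-algebra, A, B ∈ R, C := AB − BA, and suppose AC − CA = Σ_{i=1}^{L+1} α_i A^i + δ·B + ε·1 + β·(AB + BA) for scalars α_i, δ, ε, β ∈ S. Let x_{i,j}, y_{i,j} ∈ S (defined for j ≥ 1 and all integers i, with the convention x_{i,j} = y_{i,j} = 0 whenever i < 0 or i > j) satisfy the initial conditions x_{0,1} = β, x_{1,1} = 1, y_{0,1} = δ, y_{1,1} = 2β, and for j ≥ 2 the recurrences x_{i,j} = x_{i−1,j−1} + β x_{i,j−1} + y_{i,j−1} and y_{i,j} = δ x_{i,j−1} + 2β x_{i−1,j−1} + y_{i−1,j−1}. Then for all integers m ≥ ℓ ≥ 1: A^m C A^ℓ + A^ℓ C A^m = Σ_{i=0}^{ℓ} x_{i,ℓ} · ( A^{m+i} C + C A^{m+i} ) − Σ_{n=0}^{ℓ} y_{n,ℓ} · ( A^{m+n} B − B A^{m+n} ). -/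
private def Xc {S : Type*} [CommRing S] (x : ℤ → ℕ → S) : ℤ → ℕ → S :=
  fun i j => if j = 0 then (if i = 0 then 1 else 0) else x i j

private def Yc {S : Type*} [CommRing S] (y : ℤ → ℕ → S) : ℤ → ℕ → S :=
  fun i j => if j = 0 then 0 else y i j

private def uc {S : Type*} [CommRing S] (x : ℤ → ℕ → S) : ℕ → ℤ → S
  | 0 => fun _ => 0
  | j+1 => fun i => uc x j (i-1) + Xc x i j

private def vc {S : Type*} [CommRing S] (y : ℤ → ℕ → S) : ℕ → ℤ → S
  | 0 => fun i => if i = 0 then 1 else 0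
  | j+1 => fun i => vc y j (i-1) + Yc y i j

private lemma sum_shift {S M : Type*} [CommRing S] [AddCommMonoid M] [Module S M]
    (w : ℤ → S) (H : ℕ → M) (n : ℕ) (h0 : w (-1) = 0) :
    ∑ k ∈ Finset.range (n+2), w ((k:ℤ)-1) • H k
      = ∑ k ∈ Finset.range (n+1), w (k:ℤ) • H (k+1) := by
  rw [Finset.sum_range_succ']
  simp only [Nat.cast_zero, zero_sub, h0, zero_smul, add_zero, Nat.cast_add, Nat.cast_one,
    add_sub_cancel_right]

private lemma sum_trunc {S M : Type*} [CommRing S] [AddCommMonoid M] [Module S M]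
    (w : ℤ → S) (H : ℕ → M) (n : ℕ) (h0 : w ((n:ℤ)+1) = 0) :
    ∑ k ∈ Finset.range (n+2), w (k:ℤ) • H k = ∑ k ∈ Finset.range (n+1), w (k:ℤ) • H k := by
  rw [Finset.sum_range_succ]
  have h : w ((n+1 : ℕ) : ℤ) = 0 := by push_cast; exact h0
  rw [h, zero_smul, add_zero]

/-- Lemma 3 of the paper: given the quadratic relation for `[A,C]` and the coefficients
`x_{i,j}`, `y_{i,j}` satisfying the stated recurrences, for `m ≥ ℓ ≥ 1`:
`A^m C A^ℓ + A^ℓ C A^m = Σ_{i=0}^ℓ x_{i,ℓ} {A^{m+i},C} - Σ_{n=0}^ℓ y_{n,ℓ} [A^{m+n},B]`. -/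
theorem stmt4 {S R : Type*} [CommRing S] [Ring R] [Algebra S R]
    (A B C : R) (hC : C = A * B - B * A) (L : ℕ) (α : ℕ → S) (δ ε β : S)
    (hrel : A * C - C * A =
      ∑ i ∈ Finset.Icc 1 (L + 1), α i • A ^ i + δ • B + ε • (1 : R) + β • (A * B + B * A))
    (x y : ℤ → ℕ → S)
    (hx_out : ∀ j : ℕ, 1 ≤ j → ∀ i : ℤ, (i < 0 ∨ (j : ℤ) < i) → x i j = 0)
    (hy_out : ∀ j : ℕ, 1 ≤ j → ∀ i : ℤ, (i < 0 ∨ (j : ℤ) < i) → y i j = 0)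
    (hx01 : x 0 1 = β) (hx11 : x 1 1 = 1) (hy01 : y 0 1 = δ) (hy11 : y 1 1 = 2 * β)
    (hxrec : ∀ j : ℕ, 2 ≤ j → ∀ i : ℤ,
      x i j = x (i - 1) (j - 1) + β * x i (j - 1) + y i (j - 1))
    (hyrec : ∀ j : ℕ, 2 ≤ j → ∀ i : ℤ,
      y i j = δ * x i (j - 1) + 2 * β * x (i - 1) (j - 1) + y (i - 1) (j - 1))
    (m ℓ : ℕ) (hℓ : 1 ≤ ℓ) (hm : ℓ ≤ m) :
    A ^ m * C * A ^ ℓ + A ^ ℓ * C * A ^ m =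
      ∑ i ∈ Finset.range (ℓ + 1), x (i : ℤ) ℓ • (A ^ (m + i) * C + C * A ^ (m + i))
        - ∑ n ∈ Finset.range (ℓ + 1), y (n : ℤ) ℓ • (A ^ (m + n) * B - B * A ^ (m + n)) := by
  classical
  -- vanishing of extended coefficients
  have hX0 : ∀ (j : ℕ) (i : ℤ), (i < 0 ∨ (j:ℤ) < i) → Xc x i j = 0 := by
    intro j i h
    rcases j with _ | j
    · simp only [Nat.cast_zero] at h
      simp only [Xc, if_true]
      rw [if_neg (by omega)]
    · simp only [Xc, Nat.succ_ne_zero, if_false]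
      exact hx_out (j+1) (by omega) i h
  have hY0 : ∀ (j : ℕ) (i : ℤ), (i < 0 ∨ (j:ℤ) < i) → Yc y i j = 0 := by
    intro j i h
    rcases j with _ | j
    · simp [Yc]
    · simp only [Yc, Nat.succ_ne_zero, if_false]
      exact hy_out (j+1) (by omega) i h
  have hu0 : ∀ (j : ℕ) (i : ℤ), (i < 0 ∨ (j:ℤ) < i) → uc x j i = 0 := by
    intro j
    induction j with
    | zero => intro i h; simp [uc]
    | succ j ih =>
        intro i h
        push_cast at h
        simp only [uc]
        rw [ih (i-1) (by push_cast; omega), hX0 j i (by push_cast; omega), add_zero]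
  have hv0 : ∀ (j : ℕ) (i : ℤ), (i < 0 ∨ (j:ℤ) < i) → vc y j i = 0 := by
    intro j
    induction j with
    | zero => intro i h; simp only [vc]; rw [if_neg (by omega)]
    | succ j ih =>
        intro i h
        push_cast at h
        simp only [vc]
        rw [ih (i-1) (by push_cast; omega), hY0 j i (by push_cast; omega), add_zero]
  -- extended recurrences
  have hXrec : ∀ (j : ℕ) (i : ℤ), Xc x i (j+1) = Xc x (i-1) j + β * Xc x i j + Yc y i j := by
    intro j i
    rcases j with _ | j
    · simp only [Xc, Yc, zero_add, if_true, if_false, add_zero]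
      by_cases h0 : i = 0
      · subst h0; norm_num [hx01]
      · by_cases h1 : i = 1
        · subst h1; norm_num [hx11]
        · rw [hx_out 1 le_rfl i (by omega)]; simp [sub_eq_zero, h0, h1]
    · simp only [Xc, Yc, Nat.succ_ne_zero, if_false]
      exact hxrec (j+2) (by omega) i
  have hYrec : ∀ (j : ℕ) (i : ℤ),
      Yc y i (j+1) = δ * Xc x i j + 2*β * Xc x (i-1) j + Yc y (i-1) j := by
    intro j i
    rcases j with _ | j
    · simp only [Xc, Yc, zero_add, if_true, if_false, add_zero]
      by_cases h0 : i = 0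
      · subst h0; norm_num [hy01]
      · by_cases h1 : i = 1
        · subst h1; norm_num [hy11]
        · rw [hy_out 1 le_rfl i (by omega)]; simp [sub_eq_zero, h0, h1]
    · simp only [Xc, Yc, Nat.succ_ne_zero, if_false]
      exact hyrec (j+2) (by omega) i
  -- the two key coefficient identities
  have hYu : ∀ (j : ℕ) (i : ℤ), Yc y i j = δ * uc x j i + 2*β * uc x j (i-1) := by
    intro j
    induction j with
    | zero => intro i; simp [Yc, uc]
    | succ j ih =>
        intro i
        rw [hYrec j i, ih (i-1)]
        simp only [uc]
        ring
  have hXv : ∀ (j : ℕ) (i : ℤ), δ * Xc x i j + 2*β * Xc x (i-1) j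
      = β * Yc y i j + δ * vc y j i + 2*β * vc y j (i-1) := by
    intro j
    induction j with
    | zero =>
        intro i
        simp only [Xc, Yc, vc, if_true]
        ring
    | succ j ih =>
        intro i
        rw [hXrec j i, hXrec j (i-1), hYrec j i]
        simp only [vc]
        linear_combination ih (i-1)
  -- ring-side identities
  have idW : ∀ (W : R) (a b : ℕ),
      A^a * W * A^(b+1) = A^(a+1) * W * A^b - A^a * (A*W - W*A) * A^b := by
    intro W a b; rw [pow_succ' A b, pow_succ A a]; noncomm_ring
  have idW' : ∀ (W : R) (a b : ℕ),
      A^(b+1) * W * A^a = A^b * W * A^(a+1) + A^b * (A*W - W*A) * A^a := by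
    intro W a b; rw [pow_succ A b, pow_succ' A a]; noncomm_ring
  have hE1 : ∀ p q : ℕ, A^q * (A*B) * A^p = A^(q+1)*B*A^p := by
    intro p q; rw [pow_succ A q]; noncomm_ring
  have hE2 : ∀ p q : ℕ, A^q * (B*A) * A^p = A^q*B*A^(p+1) := by
    intro p q; rw [pow_succ' A p]; noncomm_ring
  have hCs : ∀ p q : ℕ, A^p * (A*B - B*A) * A^q = A^(p+1)*B*A^q - A^p*B*A^(q+1) := by
    intro p q; rw [pow_succ A p, pow_succ' A q]; noncomm_ring
  have hsum : ∀ p q : ℕ, (A^q * ∑ i ∈ Finset.Icc 1 (L+1), α i • A^i) * A^p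
      = (A^p * ∑ i ∈ Finset.Icc 1 (L+1), α i • A^i) * A^q := by
    intro p q
    simp only [Finset.mul_sum, Finset.sum_mul, smul_mul_assoc, mul_smul_comm, mul_assoc,
      ← pow_add]
    exact Finset.sum_congr rfl fun i _ => by rw [show q + i + p = p + i + q by omega]
  have hD : ∀ p q : ℕ, A^q * (A*C - C*A) * A^p - A^p * (A*C - C*A) * A^q
      = β • (A^p*C*A^q + A^q*C*A^p) - δ • (A^p*B*A^q - A^q*B*A^p)
        - (2*β) • (A^(p+1)*B*A^q - A^q*B*A^(p+1)) := by
    intro p q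
    rw [hrel, hC]
    simp only [mul_add, add_mul, mul_smul_comm, smul_mul_assoc, mul_one]
    rw [hsum p q, show (A^q : R) * A^p = A^p * A^q by rw [← pow_add, ← pow_add, Nat.add_comm],
      hE1 p q, hE1 q p, hE2 p q, hE2 q p, hCs p q, hCs q p]
    module
  -- main mutual induction
  have main : ∀ (l : ℕ) (m' : ℕ),
      (A ^ m' * C * A ^ l + A ^ l * C * A ^ m' =
        ∑ i ∈ Finset.range (l + 1), Xc x (i : ℤ) l • (A ^ (m' + i) * C + C * A ^ (m' + i))
          - ∑ n ∈ Finset.range (l + 1), Yc y (n : ℤ) l • (A ^ (m' + n) * B - B * A ^ (m' + n)))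
      ∧ (A ^ m' * B * A ^ l - A ^ l * B * A ^ m' =
        ∑ n ∈ Finset.range (l + 1), vc y l (n : ℤ) • (A ^ (m' + n) * B - B * A ^ (m' + n))
          - ∑ i ∈ Finset.range (l + 1), uc x l (i : ℤ) • (A ^ (m' + i) * C + C * A ^ (m' + i))) := by
    intro l
    induction l with
    | zero => intro m'; constructor <;> simp [Xc, Yc, uc, vc]
    | succ l ih =>
        intro m'
        constructor
        · -- the T-identity
          have e : A^m'*C*A^(l+1) + A^(l+1)*C*A^m'
              = (A^(m'+1)*C*A^l + A^l*C*A^(m'+1))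
                + (A^l*(A*C - C*A)*A^m' - A^m'*(A*C - C*A)*A^l) := by
            rw [idW C m' l, idW' C m' l]; abel
          rw [e, hD m' l, (ih (m'+1)).1, (ih m').1, (ih m').2, (ih (m'+1)).2]
          have hXfull : ∀ i : ℤ, Xc x i (l+1)
              = Xc x (i-1) l + β * Xc x i l + (δ * uc x l i + 2*β * uc x l (i-1)) := by
            intro i; rw [hXrec l i, hYu l i]
          have hYfull : ∀ n : ℤ, Yc y n (l+1)
              = Yc y (n-1) l + β * Yc y n l + (δ * vc y l n + 2*β * vc y l (n-1)) := by
            intro n; rw [hYrec l n]; linear_combination hXv l n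
          have t1 : ∑ i ∈ Finset.range (l+2),
                Xc x ((i:ℤ)-1) l • (A^(m'+i)*C + C*A^(m'+i))
              = ∑ i ∈ Finset.range (l+1), Xc x (i:ℤ) l • (A^(m'+1+i)*C + C*A^(m'+1+i)) := by
            refine (sum_shift (fun t => Xc x t l) (fun k => A^(m'+k)*C + C*A^(m'+k)) l
              (hX0 l (-1) (Or.inl (by norm_num)))).trans ?_
            exact Finset.sum_congr rfl fun k _ => by rw [show m'+(k+1) = m'+1+k by omega]
          have t2 : ∑ i ∈ Finset.range (l+2),
                (β * Xc x (i:ℤ) l) • (A^(m'+i)*C + C*A^(m'+i))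
              = β • ∑ i ∈ Finset.range (l+1), Xc x (i:ℤ) l • (A^(m'+i)*C + C*A^(m'+i)) := by
            refine (sum_trunc (fun t => β * Xc x t l) (fun k => A^(m'+k)*C + C*A^(m'+k)) l
              (by show β * Xc x ((l:ℤ)+1) l = 0; rw [hX0 l _ (Or.inr (by omega))]; ring)).trans ?_
            rw [Finset.smul_sum]
            exact Finset.sum_congr rfl fun k _ => (smul_smul β _ _).symm
          have t3 : ∑ i ∈ Finset.range (l+2),
                (δ * uc x l (i:ℤ)) • (A^(m'+i)*C + C*A^(m'+i))
              = δ • ∑ i ∈ Finset.range (l+1), uc x l (i:ℤ) • (A^(m'+i)*C + C*A^(m'+i)) := by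
            refine (sum_trunc (fun t => δ * uc x l t) (fun k => A^(m'+k)*C + C*A^(m'+k)) l
              (by show δ * uc x l ((l:ℤ)+1) = 0; rw [hu0 l _ (Or.inr (by omega))]; ring)).trans ?_
            rw [Finset.smul_sum]
            exact Finset.sum_congr rfl fun k _ => (smul_smul δ _ _).symm
          have t4 : ∑ i ∈ Finset.range (l+2),
                (2*β * uc x l ((i:ℤ)-1)) • (A^(m'+i)*C + C*A^(m'+i))
              = (2*β) • ∑ i ∈ Finset.range (l+1), uc x l (i:ℤ) • (A^(m'+1+i)*C + C*A^(m'+1+i)) := by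
            refine (sum_shift (fun t => 2*β * uc x l t) (fun k => A^(m'+k)*C + C*A^(m'+k)) l
              (by show 2*β * uc x l (-1) = 0; rw [hu0 l (-1) (Or.inl (by norm_num))]; ring)).trans ?_
            rw [Finset.smul_sum]
            refine Finset.sum_congr rfl fun k _ => ?_
            rw [show m'+(k+1) = m'+1+k by omega, ← smul_smul]
          have t5 : ∑ n ∈ Finset.range (l+2),
                Yc y ((n:ℤ)-1) l • (A^(m'+n)*B - B*A^(m'+n))
              = ∑ n ∈ Finset.range (l+1), Yc y (n:ℤ) l • (A^(m'+1+n)*B - B*A^(m'+1+n)) := by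
            refine (sum_shift (fun t => Yc y t l) (fun k => A^(m'+k)*B - B*A^(m'+k)) l
              (hY0 l (-1) (Or.inl (by norm_num)))).trans ?_
            exact Finset.sum_congr rfl fun k _ => by rw [show m'+(k+1) = m'+1+k by omega]
          have t6 : ∑ n ∈ Finset.range (l+2),
                (β * Yc y (n:ℤ) l) • (A^(m'+n)*B - B*A^(m'+n))
              = β • ∑ n ∈ Finset.range (l+1), Yc y (n:ℤ) l • (A^(m'+n)*B - B*A^(m'+n)) := by
            refine (sum_trunc (fun t => β * Yc y t l) (fun k => A^(m'+k)*B - B*A^(m'+k)) l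
              (by show β * Yc y ((l:ℤ)+1) l = 0; rw [hY0 l _ (Or.inr (by omega))]; ring)).trans ?_
            rw [Finset.smul_sum]
            exact Finset.sum_congr rfl fun k _ => (smul_smul β _ _).symm
          have t7 : ∑ n ∈ Finset.range (l+2),
                (δ * vc y l (n:ℤ)) • (A^(m'+n)*B - B*A^(m'+n))
              = δ • ∑ n ∈ Finset.range (l+1), vc y l (n:ℤ) • (A^(m'+n)*B - B*A^(m'+n)) := by
            refine (sum_trunc (fun t => δ * vc y l t) (fun k => A^(m'+k)*B - B*A^(m'+k)) l
              (by show δ * vc y l ((l:ℤ)+1) = 0; rw [hv0 l _ (Or.inr (by omega))]; ring)).trans ?_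
            rw [Finset.smul_sum]
            exact Finset.sum_congr rfl fun k _ => (smul_smul δ _ _).symm
          have t8 : ∑ n ∈ Finset.range (l+2),
                (2*β * vc y l ((n:ℤ)-1)) • (A^(m'+n)*B - B*A^(m'+n))
              = (2*β) • ∑ n ∈ Finset.range (l+1), vc y l (n:ℤ) • (A^(m'+1+n)*B - B*A^(m'+1+n)) := by
            refine (sum_shift (fun t => 2*β * vc y l t) (fun k => A^(m'+k)*B - B*A^(m'+k)) l
              (by show 2*β * vc y l (-1) = 0; rw [hv0 l (-1) (Or.inl (by norm_num))]; ring)).trans ?_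
            rw [Finset.smul_sum]
            refine Finset.sum_congr rfl fun k _ => ?_
            rw [show m'+(k+1) = m'+1+k by omega, ← smul_smul]
          simp only [hXfull, hYfull, add_smul, Finset.sum_add_distrib]
          rw [t1, t2, t3, t4, t5, t6, t7, t8]
          module
        · -- the U-identity
          have e : A^m'*B*A^(l+1) - A^(l+1)*B*A^m'
              = (A^(m'+1)*B*A^l - A^l*B*A^(m'+1)) - (A^m'*C*A^l + A^l*C*A^m') := by
            rw [idW B m' l, idW' B m' l, ← hC]; abel
          rw [e, (ih (m'+1)).2, (ih m').1]
          have s1 : ∑ n ∈ Finset.range (l+2),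
                vc y l ((n:ℤ)-1) • (A^(m'+n)*B - B*A^(m'+n))
              = ∑ n ∈ Finset.range (l+1), vc y l (n:ℤ) • (A^(m'+1+n)*B - B*A^(m'+1+n)) := by
            refine (sum_shift (vc y l) (fun k => A^(m'+k)*B - B*A^(m'+k)) l
              (hv0 l (-1) (Or.inl (by norm_num)))).trans ?_
            exact Finset.sum_congr rfl fun k _ => by rw [show m'+(k+1) = m'+1+k by omega]
          have s2 : ∑ n ∈ Finset.range (l+2),
                Yc y (n:ℤ) l • (A^(m'+n)*B - B*A^(m'+n))
              = ∑ n ∈ Finset.range (l+1), Yc y (n:ℤ) l • (A^(m'+n)*B - B*A^(m'+n)) :=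
            sum_trunc (fun t => Yc y t l) (fun k => A^(m'+k)*B - B*A^(m'+k)) l
              (hY0 l _ (Or.inr (by omega)))
          have s3 : ∑ i ∈ Finset.range (l+2),
                uc x l ((i:ℤ)-1) • (A^(m'+i)*C + C*A^(m'+i))
              = ∑ i ∈ Finset.range (l+1), uc x l (i:ℤ) • (A^(m'+1+i)*C + C*A^(m'+1+i)) := by
            refine (sum_shift (uc x l) (fun k => A^(m'+k)*C + C*A^(m'+k)) l
              (hu0 l (-1) (Or.inl (by norm_num)))).trans ?_
            exact Finset.sum_congr rfl fun k _ => by rw [show m'+(k+1) = m'+1+k by omega]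
          have s4 : ∑ i ∈ Finset.range (l+2),
                Xc x (i:ℤ) l • (A^(m'+i)*C + C*A^(m'+i))
              = ∑ i ∈ Finset.range (l+1), Xc x (i:ℤ) l • (A^(m'+i)*C + C*A^(m'+i)) :=
            sum_trunc (fun t => Xc x t l) (fun k => A^(m'+k)*C + C*A^(m'+k)) l
              (hX0 l _ (Or.inr (by omega)))
          simp only [vc, uc, add_smul, Finset.sum_add_distrib]
          rw [s1, s2, s3, s4]
          abel
  rw [(main ℓ m).1]
  have hℓ0 : ℓ ≠ 0 := by omega
  congr 1
  · exact Finset.sum_congr rfl fun k _ => by simp [Xc, hℓ0]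
  · exact Finset.sum_congr rfl fun k _ => by simp [Yc, hℓ0]
end

section
/- Let S be a commutative ring in which 2 is invertible, R an associative S-algebra, A, B ∈ R, C := AB − BA, and suppose AC − CA = Σ_{i=1}^{L+1} α_i A^i + δ·B + ε·1 + β·(AB + BA) for scalars α_i, δ, ε, β ∈ S. Then for every integer j ≥ 1 there exist scalars s_0, s_1, …, s_{j−1} ∈ S such that A^j B − B A^j = Σ_{k=0}^{j−1} s_k · ( A^k C + C A^k ). -/
/-- Corollary 2 of the paper: if `2` is invertible in `S` and `[A,C]` satisfies the
quadratic relation, then for every `j ≥ 1` there are scalars `s_0, …, s_{j-1}` with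
`[A^j, B] = Σ_{k=0}^{j-1} s_k {A^k, C}`. -/
theorem stmt5 {S R : Type*} [CommRing S] [Ring R] [Algebra S R] [Invertible (2 : S)]
    (A B C : R) (hC : C = A * B - B * A) (L : ℕ) (α : ℕ → S) (δ ε β : S)
    (hrel : A * C - C * A =
      ∑ i ∈ Finset.Icc 1 (L + 1), α i • A ^ i + δ • B + ε • (1 : R) + β • (A * B + B * A))
    (j : ℕ) (hj : 1 ≤ j) :
    ∃ s : ℕ → S,
      A ^ j * B - B * A ^ j = ∑ k ∈ Finset.range j, s k • (A ^ k * C + C * A ^ k) := by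
  -- the submodules
  set f : ℕ → R := fun k => A ^ k * C + C * A ^ k with hf
  let N : ℕ → Submodule S R := fun n => Submodule.span S (Set.range fun i : Fin n => f i)
  have mono : ∀ {a b : ℕ}, a ≤ b → N a ≤ N b := by
    intro a b hab
    apply Submodule.span_mono
    rintro x ⟨i, rfl⟩
    exact ⟨⟨i, lt_of_lt_of_le i.2 hab⟩, rfl⟩
  -- commutator of A^m with D
  have hD : ∀ m : ℕ, A ^ m * (A * C - C * A) - (A * C - C * A) * A ^ m
      = δ • (A ^ m * B - B * A ^ m)
        + β • (A * (A ^ m * B - B * A ^ m) + (A ^ m * B - B * A ^ m) * A) := by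
    intro m
    rw [hrel]
    have hcomm : A * A ^ m = A ^ m * A := (pow_succ' A m).symm.trans (pow_succ A m)
    simp only [Finset.mul_sum, Finset.sum_mul, mul_add, add_mul, mul_smul_comm,
      smul_mul_assoc, mul_one, one_mul, ← pow_add]
    simp only [show ∀ i, m + i = i + m from fun i => Nat.add_comm m i]
    have hcomm2 : ∀ x : R, A * (A ^ m * x) = A ^ m * (A * x) := fun x => by
      rw [← mul_assoc, hcomm, mul_assoc]
    simp only [smul_sub, smul_add, mul_sub, sub_mul, mul_assoc, hcomm2, hcomm]
    abel
  -- key identity: A * f m + f m * A = 2 • f (m+1) - [A^m, D]-terms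
  have hid2 : ∀ m : ℕ, A * f m + f m * A
      = (2:S) • f (m + 1) - δ • (A ^ m * B - B * A ^ m)
        - β • (A * (A ^ m * B - B * A ^ m) + (A ^ m * B - B * A ^ m) * A) := by
    intro m
    have hcomm : A * A ^ m = A ^ m * A := (pow_succ' A m).symm.trans (pow_succ A m)
    have h1 : A * f m + f m * A + (A ^ m * (A * C - C * A) - (A * C - C * A) * A ^ m)
        = f (m + 1) + f (m + 1) := by
      simp only [hf, pow_succ]
      have hcomm2 : ∀ x : R, A * (A ^ m * x) = A ^ m * (A * x) := fun x => by
        rw [← mul_assoc, hcomm, mul_assoc]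
      simp only [mul_add, add_mul, mul_sub, sub_mul, mul_assoc, hcomm2, hcomm]
      abel
    have h2 := hD m
    rw [h2] at h1
    rw [two_smul]
    linear_combination (norm := module) h1
  -- main strong induction
  have key : ∀ n : ℕ, (A ^ n * B - B * A ^ n ∈ N n) ∧
      (∀ x ∈ N n, A * x + x * A ∈ N (n + 1)) := by
    intro n
    induction n using Nat.strong_induction_on with
    | _ n ih =>
      have G : ∀ x ∈ N n, A * x + x * A ∈ N (n + 1) := by
        intro x hx
        induction hx using Submodule.span_induction with
        | mem x hxs =>
          obtain ⟨i, rfl⟩ := hxs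
          rw [hid2 i]
          have h1 : f ((i : ℕ) + 1) ∈ N (n + 1) :=
            Submodule.subset_span ⟨⟨(i : ℕ) + 1, by omega⟩, rfl⟩
          have h2 : A ^ (i : ℕ) * B - B * A ^ (i : ℕ) ∈ N (n + 1) :=
            mono (by omega) ((ih i i.2).1)
          have h3 : A * (A ^ (i : ℕ) * B - B * A ^ (i : ℕ))
              + (A ^ (i : ℕ) * B - B * A ^ (i : ℕ)) * A ∈ N (n + 1) :=
            mono (by omega) ((ih i i.2).2 _ ((ih i i.2).1))
          exact Submodule.sub_mem _ (Submodule.sub_mem _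
            (Submodule.smul_mem _ _ h1) (Submodule.smul_mem _ _ h2))
            (Submodule.smul_mem _ _ h3)
        | zero => simpa using Submodule.zero_mem (N (n + 1))
        | add x y hx hy hx' hy' =>
          have : A * (x + y) + (x + y) * A = (A * x + x * A) + (A * y + y * A) := by
            noncomm_ring
          rw [this]; exact Submodule.add_mem _ hx' hy'
        | smul a x hx hx' =>
          have : A * (a • x) + (a • x) * A = a • (A * x + x * A) := by
            simp [mul_smul_comm, smul_mul_assoc, smul_add]
          rw [this]; exact Submodule.smul_mem _ _ hx'
      refine ⟨?_, G⟩
      cases n with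
      | zero => simp
      | succ m =>
        have hX : A ^ m * B - B * A ^ m ∈ N m := (ih m (by omega)).1
        have hAX : A * (A ^ m * B - B * A ^ m) + (A ^ m * B - B * A ^ m) * A ∈ N (m + 1) :=
          (ih m (by omega)).2 _ hX
        have hgen : f m ∈ N (m + 1) := Submodule.subset_span ⟨⟨m, by omega⟩, rfl⟩
        have hident : (2:S) • (A ^ (m + 1) * B - B * A ^ (m + 1))
            = f m + (A * (A ^ m * B - B * A ^ m) + (A ^ m * B - B * A ^ m) * A) := by
          have hcomm : A * A ^ m = A ^ m * A := (pow_succ' A m).symm.trans (pow_succ A m)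
          have hcomm2 : ∀ x : R, A * (A ^ m * x) = A ^ m * (A * x) := fun x => by
            rw [← mul_assoc, hcomm, mul_assoc]
          simp only [hf, hC, pow_succ, two_smul, mul_add, add_mul, mul_sub, sub_mul,
            mul_assoc, hcomm2, hcomm]
          abel
        have hmem : (2:S) • (A ^ (m + 1) * B - B * A ^ (m + 1)) ∈ N (m + 1) := by
          rw [hident]; exact Submodule.add_mem _ hgen hAX
        have := Submodule.smul_mem (N (m + 1)) (⅟(2:S)) hmem
        rwa [invOf_smul_smul] at this
  -- conclude
  obtain ⟨c, hc⟩ := (Submodule.mem_span_range_iff_exists_fun (R := S)).1 (key j).1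
  refine ⟨fun k => if h : k < j then c ⟨k, h⟩ else 0, ?_⟩
  rw [← hc, ← Fin.sum_univ_eq_sum_range (fun k => (if h : k < j then c ⟨k, h⟩ else 0) • f k) j]
  refine Finset.sum_congr rfl fun i _ => ?_
  rw [dif_pos i.2]
end

section
/- Let S be a commutative ring, R an associative S-algebra, A, B ∈ R, C := AB − BA, and suppose AC − CA = Σ_{i=1}^{L+1} α_i A^i + δ·B + ε·1 + β·(AB + BA) for scalars α_i, δ, ε, β ∈ S. Let x̄_{i,j}, ȳ_{i,j} ∈ S (defined for j ≥ 1 and all integers i, with the conventions x̄_{i,j} = 0 whenever i < 0 or i ≥ j, and ȳ_{i,j} = 0 whenever i < 0 or i > j) satisfy the initial conditions x̄_{0,1} = 1, ȳ_{0,1} = 0, ȳ_{1,1} = 1, and for j ≥ 2 the recurrences x̄_{i,j} = x̄_{i−1,j−1} + β x̄_{i,j−1} + ȳ_{i,j−1} and ȳ_{i,j} = δ x̄_{i,j−1} + 2β x̄_{i−1,j−1} + ȳ_{i−1,j−1}. Then for all integers i > j ≥ 1: A^i B A^j − A^j B A^i = Σ_{k=0}^{j} ȳ_{k,j} · ( A^{i+k}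 B − B A^{i+k} ) − Σ_{k=0}^{j−1} x̄_{k,j} · ( A^{i+k} C + C A^{i+k} ). -/
/-- Pure bookkeeping about the coefficient recurrences. -/
theorem stmt6_aux {S R : Type*} [CommRing S] [AddCommGroup R] [Module S R]
    (f g : ℕ → R) (j : ℕ) (δ β : S) (xb yb : ℤ → ℕ → S)
    (hxj : xb (j : ℤ) j = 0) (hxj1 : xb ((j : ℤ) + 1) j = 0)
    (hxneg : xb (-1) j = 0) (hyneg : yb (-1) j = 0)
    (hx : ∀ k : ℕ, xb (k : ℤ) (j + 1) = xb ((k : ℤ) - 1) j + β * xb (k : ℤ) j + yb (k : ℤ) j)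
    (hy : ∀ k : ℕ, yb (k : ℤ) (j + 1)
      = δ * xb (k : ℤ) j + 2 * β * xb ((k : ℤ) - 1) j + yb ((k : ℤ) - 1) j) :
    ∑ k ∈ Finset.range (j + 1 + 1), yb (k : ℤ) (j + 1) • f k
      - ∑ k ∈ Finset.range (j + 1), xb (k : ℤ) (j + 1) • g k
    = ∑ k ∈ Finset.range (j + 1), yb (k : ℤ) j • (f (k + 1) - g k)
      - ∑ k ∈ Finset.range j, xb (k : ℤ) j •
          ((g (k + 1) - δ • f k) - β • (f (k + 1) + f (k + 1)) + β • g k) := by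
  have e1 : ∀ k ∈ Finset.range (j + 1 + 1), yb (k : ℤ) (j + 1) • f k
      = (δ * xb (k : ℤ) j) • f k + (2 * β * xb ((k : ℤ) - 1) j) • f k
          + yb ((k : ℤ) - 1) j • f k := by
    intro k _
    rw [hy k, add_smul, add_smul]
  have e2 : ∀ k ∈ Finset.range (j + 1), xb (k : ℤ) (j + 1) • g k
      = xb ((k : ℤ) - 1) j • g k + (β * xb (k : ℤ) j) • g k + yb (k : ℤ) j • g k := by
    intro k _
    rw [hx k, add_smul, add_smul]
  rw [Finset.sum_congr rfl e1, Finset.sum_congr rfl e2,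
    Finset.sum_add_distrib, Finset.sum_add_distrib, Finset.sum_add_distrib,
    Finset.sum_add_distrib]
  have ha : ∑ k ∈ Finset.range (j + 1 + 1), (δ * xb (k : ℤ) j) • f k
      = ∑ k ∈ Finset.range j, (δ * xb (k : ℤ) j) • f k := by
    rw [Finset.sum_range_succ, Finset.sum_range_succ]
    simp only [Nat.cast_add, Nat.cast_one, hxj1, hxj, mul_zero, zero_smul, add_zero]
  have hb : ∑ k ∈ Finset.range (j + 1 + 1), (2 * β * xb ((k : ℤ) - 1) j) • f k
      = ∑ k ∈ Finset.range j, (2 * β * xb (k : ℤ) j) • f (k + 1) := by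
    rw [Finset.sum_range_succ']
    simp only [Nat.cast_zero, zero_sub, hxneg, mul_zero, zero_smul, add_zero,
      Nat.cast_add, Nat.cast_one, add_sub_cancel_right]
    rw [Finset.sum_range_succ]
    simp only [hxj, mul_zero, zero_smul, add_zero]
  have hc : ∑ k ∈ Finset.range (j + 1 + 1), yb ((k : ℤ) - 1) j • f k
      = ∑ k ∈ Finset.range (j + 1), yb (k : ℤ) j • f (k + 1) := by
    rw [Finset.sum_range_succ']
    simp only [Nat.cast_zero, zero_sub, hyneg, zero_smul, add_zero,
      Nat.cast_add, Nat.cast_one, add_sub_cancel_right]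
  have hxa : ∑ k ∈ Finset.range (j + 1), xb ((k : ℤ) - 1) j • g k
      = ∑ k ∈ Finset.range j, xb (k : ℤ) j • g (k + 1) := by
    rw [Finset.sum_range_succ']
    simp only [Nat.cast_zero, zero_sub, hxneg, zero_smul, add_zero,
      Nat.cast_add, Nat.cast_one, add_sub_cancel_right]
  have hxb2 : ∑ k ∈ Finset.range (j + 1), (β * xb (k : ℤ) j) • g k
      = ∑ k ∈ Finset.range j, (β * xb (k : ℤ) j) • g k := by
    rw [Finset.sum_range_succ]
    simp only [hxj, mul_zero, zero_smul, add_zero]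
  have hb2 : ∑ k ∈ Finset.range j, (2 * β * xb (k : ℤ) j) • f (k + 1)
      = ∑ k ∈ Finset.range j, ((β * xb (k : ℤ) j) • f (k + 1)
          + (β * xb (k : ℤ) j) • f (k + 1)) := by
    refine Finset.sum_congr rfl fun k _ => ?_
    rw [← add_smul]
    congr 1
    ring
  rw [ha, hb, hc, hb2, hxa, hxb2, Finset.sum_add_distrib]
  simp only [smul_sub, smul_add, smul_smul, Finset.sum_sub_distrib, Finset.sum_add_distrib,
    mul_comm, mul_left_comm]
  abel

/-- Lemma (prop6) of the paper: with coefficients `x̄_{i,j}`, `ȳ_{i,j}` satisfying the stated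
recurrences, for `i > j ≥ 1`:
`A^i B A^j - A^j B A^i = Σ_{k=0}^{j} ȳ_{k,j} [A^{i+k},B] - Σ_{k=0}^{j-1} x̄_{k,j} {A^{i+k},C}`. -/
theorem stmt6 {S R : Type*} [CommRing S] [Ring R] [Algebra S R]
    (A B C : R) (hC : C = A * B - B * A) (L : ℕ) (α : ℕ → S) (δ ε β : S)
    (hrel : A * C - C * A =
      ∑ i ∈ Finset.Icc 1 (L + 1), α i • A ^ i + δ • B + ε • (1 : R) + β • (A * B + B * A))
    (xb yb : ℤ → ℕ → S)
    (hxb_out : ∀ j : ℕ, 1 ≤ j → ∀ i : ℤ, (i < 0 ∨ (j : ℤ) ≤ i) → xb i j = 0)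
    (hyb_out : ∀ j : ℕ, 1 ≤ j → ∀ i : ℤ, (i < 0 ∨ (j : ℤ) < i) → yb i j = 0)
    (hxb01 : xb 0 1 = 1) (hyb01 : yb 0 1 = 0) (hyb11 : yb 1 1 = 1)
    (hxbrec : ∀ j : ℕ, 2 ≤ j → ∀ i : ℤ,
      xb i j = xb (i - 1) (j - 1) + β * xb i (j - 1) + yb i (j - 1))
    (hybrec : ∀ j : ℕ, 2 ≤ j → ∀ i : ℤ,
      yb i j = δ * xb i (j - 1) + 2 * β * xb (i - 1) (j - 1) + yb (i - 1) (j - 1))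
    (i j : ℕ) (hj : 1 ≤ j) (hij : j < i) :
    A ^ i * B * A ^ j - A ^ j * B * A ^ i =
      ∑ k ∈ Finset.range (j + 1), yb (k : ℤ) j • (A ^ (i + k) * B - B * A ^ (i + k))
        - ∑ k ∈ Finset.range j, xb (k : ℤ) j • (A ^ (i + k) * C + C * A ^ (i + k)) := by
  have l1 : ∀ (n : ℕ) (x : R), A ^ n * (A * x) = A ^ (n + 1) * x := fun n x => by
    rw [← mul_assoc, ← pow_succ]
  have l2 : ∀ (n : ℕ) (x : R), A * (A ^ n * x) = A ^ (n + 1) * x := fun n x => by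
    rw [← mul_assoc, ← pow_succ']
  have l3 : ∀ n : ℕ, A ^ n * A = A ^ (n + 1) := fun n => (pow_succ A n).symm
  have l4 : ∀ n : ℕ, A * A ^ n = A ^ (n + 1) := fun n => (pow_succ' A n).symm
  have keyB : ∀ m : ℕ, A * (A ^ m * B - B * A ^ m) * A =
      (A ^ (m + 1 + 1) * B - B * A ^ (m + 1 + 1)) - (A ^ (m + 1) * C + C * A ^ (m + 1)) := by
    intro m
    rw [hC]
    simp only [mul_sub, sub_mul, mul_add, add_mul, mul_assoc, l1, l2, l3, l4]
    abel
  have hPcomm : ∀ n : ℕ, A ^ n * (∑ t ∈ Finset.Icc 1 (L + 1), α t • A ^ t)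
      = (∑ t ∈ Finset.Icc 1 (L + 1), α t • A ^ t) * A ^ n := by
    intro n
    rw [Finset.mul_sum, Finset.sum_mul]
    exact Finset.sum_congr rfl fun t _ => by
      rw [mul_smul_comm, smul_mul_assoc, ← pow_add, ← pow_add, Nat.add_comm]
  have hQ : ∀ m : ℕ, A ^ (m + 1) * (A * C - C * A) - (A * C - C * A) * A ^ (m + 1)
      = δ • (A ^ (m + 1) * B - B * A ^ (m + 1))
        + β • (A ^ (m + 1) * (A * B + B * A) - (A * B + B * A) * A ^ (m + 1)) := by
    intro m
    rw [hrel]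
    simp only [mul_add, add_mul, mul_smul_comm, smul_mul_assoc, mul_one, one_mul,
      smul_sub, hPcomm]
    abel
  have keyAB : ∀ m : ℕ, A ^ (m + 1) * (A * B + B * A) - (A * B + B * A) * A ^ (m + 1)
      = ((A ^ (m + 1 + 1) * B - B * A ^ (m + 1 + 1))
          + (A ^ (m + 1 + 1) * B - B * A ^ (m + 1 + 1)))
        - (A ^ (m + 1) * C + C * A ^ (m + 1)) := by
    intro m
    rw [hC]
    simp only [mul_sub, sub_mul, mul_add, add_mul, mul_assoc, l1, l2, l3, l4]
    abel
  have keyC : ∀ m : ℕ, A * (A ^ m * C + C * A ^ m) * A =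
      ((A ^ (m + 1 + 1) * C + C * A ^ (m + 1 + 1))
          - δ • (A ^ (m + 1) * B - B * A ^ (m + 1)))
        - β • ((A ^ (m + 1 + 1) * B - B * A ^ (m + 1 + 1))
            + (A ^ (m + 1 + 1) * B - B * A ^ (m + 1 + 1)))
        + β • (A ^ (m + 1) * C + C * A ^ (m + 1)) := by
    intro m
    have h1 : A * (A ^ m * C + C * A ^ m) * A =
        (A ^ (m + 1 + 1) * C + C * A ^ (m + 1 + 1))
          - (A ^ (m + 1) * (A * C - C * A) - (A * C - C * A) * A ^ (m + 1)) := by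
      simp only [mul_sub, sub_mul, mul_add, add_mul, mul_assoc, l1, l2, l3, l4]
      abel
    rw [h1, hQ m, keyAB m]
    simp only [smul_sub, smul_add]
    abel
  induction j, hj using Nat.le_induction generalizing i with
  | base =>
    simp only [Finset.sum_range_succ, Finset.sum_range_zero, Finset.sum_range_one,
      Nat.cast_zero, Nat.cast_one, hxb01, hyb01, hyb11, zero_smul, one_smul, zero_add,
      add_zero, zero_sub, pow_one, Nat.add_zero]
    rw [hC]
    simp only [mul_sub, sub_mul, mul_add, add_mul, mul_assoc, l1, l2, l3, l4]
    abel
  | succ j hj IH =>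
    obtain ⟨i', rfl⟩ : ∃ i', i = i' + 1 := ⟨i - 1, by omega⟩
    have hI := IH i' (by omega)
    have step1 : A ^ (i' + 1) * B * A ^ (j + 1) - A ^ (j + 1) * B * A ^ (i' + 1)
        = A * (A ^ i' * B * A ^ j - A ^ j * B * A ^ i') * A := by
      simp only [mul_sub, sub_mul, mul_assoc, l1, l2, l3, l4]
    rw [step1, hI]
    have expand : A * ((∑ k ∈ Finset.range (j + 1),
            yb (k : ℤ) j • (A ^ (i' + k) * B - B * A ^ (i' + k)))
          - ∑ k ∈ Finset.range j, xb (k : ℤ) j • (A ^ (i' + k) * C + C * A ^ (i' + k))) * A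
        = (∑ k ∈ Finset.range (j + 1),
            yb (k : ℤ) j • (A * (A ^ (i' + k) * B - B * A ^ (i' + k)) * A))
          - ∑ k ∈ Finset.range j,
            xb (k : ℤ) j • (A * (A ^ (i' + k) * C + C * A ^ (i' + k)) * A) := by
      simp only [mul_sub, sub_mul, Finset.mul_sum, Finset.sum_mul, mul_smul_comm,
        smul_mul_assoc]
    rw [expand]
    have hsum1 : (∑ k ∈ Finset.range (j + 1),
          yb (k : ℤ) j • (A * (A ^ (i' + k) * B - B * A ^ (i' + k)) * A))
        = ∑ k ∈ Finset.range (j + 1), yb (k : ℤ) j •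
            ((A ^ (i' + 1 + (k + 1)) * B - B * A ^ (i' + 1 + (k + 1)))
              - (A ^ (i' + 1 + k) * C + C * A ^ (i' + 1 + k))) := by
      refine Finset.sum_congr rfl fun k _ => ?_
      rw [keyB (i' + k), show i' + k + 1 + 1 = i' + 1 + (k + 1) from by omega,
        show i' + k + 1 = i' + 1 + k from by omega]
    have hsum2 : (∑ k ∈ Finset.range j,
          xb (k : ℤ) j • (A * (A ^ (i' + k) * C + C * A ^ (i' + k)) * A))
        = ∑ k ∈ Finset.range j, xb (k : ℤ) j •
            (((A ^ (i' + 1 + (k + 1)) * C + C * A ^ (i' + 1 + (k + 1)))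
                - δ • (A ^ (i' + 1 + k) * B - B * A ^ (i' + 1 + k)))
              - β • ((A ^ (i' + 1 + (k + 1)) * B - B * A ^ (i' + 1 + (k + 1)))
                  + (A ^ (i' + 1 + (k + 1)) * B - B * A ^ (i' + 1 + (k + 1))))
              + β • (A ^ (i' + 1 + k) * C + C * A ^ (i' + 1 + k))) := by
      refine Finset.sum_congr rfl fun k _ => ?_
      rw [keyC (i' + k), show i' + k + 1 + 1 = i' + 1 + (k + 1) from by omega,
        show i' + k + 1 = i' + 1 + k from by omega]
    rw [hsum1, hsum2]
    have z1 : xb (-1) j = 0 := hxb_out j hj (-1) (Or.inl (by norm_num))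
    have z2 : yb (-1) j = 0 := hyb_out j hj (-1) (Or.inl (by norm_num))
    have z3 : xb (j : ℤ) j = 0 := hxb_out j hj _ (Or.inr le_rfl)
    have z4 : xb ((j : ℤ) + 1) j = 0 := hxb_out j hj _ (Or.inr (by omega))
    have hx : ∀ k : ℕ, xb (k : ℤ) (j + 1)
        = xb ((k : ℤ) - 1) j + β * xb (k : ℤ) j + yb (k : ℤ) j := by
      intro k
      have := hxbrec (j + 1) (by omega) (k : ℤ)
      simpa [Nat.add_sub_cancel] using this
    have hy : ∀ k : ℕ, yb (k : ℤ) (j + 1)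
        = δ * xb (k : ℤ) j + 2 * β * xb ((k : ℤ) - 1) j + yb ((k : ℤ) - 1) j := by
      intro k
      have := hybrec (j + 1) (by omega) (k : ℤ)
      simpa [Nat.add_sub_cancel] using this
    exact (stmt6_aux
      (fun k => A ^ (i' + 1 + k) * B - B * A ^ (i' + 1 + k))
      (fun k => A ^ (i' + 1 + k) * C + C * A ^ (i' + 1 + k))
      j δ β xb yb z3 z4 z1 z2 hx hy).symm
end

section
/- Let S be a commutative ring in which 2 is invertible, R an associative S-algebra, A, B ∈ R, C := AB − BA, and suppose AC − CA = Σ_{i=1}^{L+1} α_i A^i + δ·B + ε·1 + β·(AB + BA) for scalars α_i, δ, ε, β ∈ S. Then for all integers i, j ≥ 1 there exist scalars W_0, W_1, …, W_{i+j−1} ∈ S such that A^i B A^j − A^j B A^i = Σ_{k=0}^{i+j−1} W_k · ( A^k C + C A^k ). -/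
namespace Stmt7Aux
variable {S R : Type*} [CommRing S] [Ring R] [Algebra S R]

def gg (A C : R) (k : ℕ) : R := A ^ k * C + C * A ^ k
def ff (A C : R) (p q : ℕ) : R := A ^ p * C * A ^ q + A ^ q * C * A ^ p

lemma secdiff (A C : R) (δ β : S)
    (hD2 : A * (A * C - C * A) - (A * C - C * A) * A = δ • C + β • (A * C + C * A))
    (p q : ℕ) :
    ff A C (p+2) q + ff A C p (q+2)
      = (ff A C (p+1) (q+1) + ff A C (p+1) (q+1)) + δ • ff A C p q
        + β • (ff A C (p+1) q + ff A C p (q+1)) := by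
  have e1 : ∀ (a : ℕ) (x : R), A ^ a * (A * x) = A ^ (a+1) * x := by
    intro a x; rw [← mul_assoc, ← pow_succ]
  have e2 : ∀ (a : ℕ), A * A ^ a = A ^ (a+1) := fun a => (pow_succ' A a).symm
  have e3 : ∀ (a : ℕ), A ^ a * A = A ^ (a+1) := fun a => (pow_succ A a).symm
  have key := congrArg₂ (fun x y : R => A ^ p * x * A ^ q + A ^ q * y * A ^ p) hD2 hD2
  have lhs_eq : A ^ p * (A * (A * C - C * A) - (A * C - C * A) * A) * A ^ q
      + A ^ q * (A * (A * C - C * A) - (A * C - C * A) * A) * A ^ p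
      = ff A C (p+2) q + ff A C p (q+2) - ff A C (p+1) (q+1) - ff A C (p+1) (q+1) := by
    simp only [ff, mul_sub, sub_mul, mul_add, add_mul, mul_assoc, e1, e2, e3]
    abel
  have rhs_eq : A ^ p * (δ • C + β • (A * C + C * A)) * A ^ q
      + A ^ q * (δ • C + β • (A * C + C * A)) * A ^ p
      = δ • ff A C p q + β • (ff A C (p+1) q + ff A C p (q+1)) := by
    simp only [ff, mul_add, add_mul, mul_smul_comm, smul_mul_assoc, smul_add, mul_assoc, e1, e2, e3]
    abel
  rw [lhs_eq, rhs_eq] at key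
  rw [sub_sub, sub_eq_iff_eq_add] at key
  rw [key]
  abel



def sp (S : Type*) {R : Type*} [CommRing S] [Ring R] [Algebra S R] (A C : R) (n : ℕ) :
    Submodule S R :=
  Submodule.span S (gg A C '' Set.Iio n)

lemma sp_mono (A C : R) {m n : ℕ} (h : m ≤ n) : sp S A C m ≤ sp S A C n :=
  Submodule.span_mono (Set.image_mono fun x hx => lt_of_lt_of_le hx h)

lemma gg_mem (A C : R) {k n : ℕ} (h : k < n) : gg A C k ∈ sp S A C n :=
  Submodule.subset_span ⟨k, h, rfl⟩

lemma ff_symm (A C : R) (p q : ℕ) : ff A C p q = ff A C q p := add_comm _ _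

lemma ff_zero (A C : R) (p : ℕ) : ff A C p 0 = gg A C p := by
  simp [ff, gg]

lemma memF [Invertible (2 : S)] (A C : R) (δ β : S)
    (hD2 : A * (A * C - C * A) - (A * C - C * A) * A = δ • C + β • (A * C + C * A)) :
    ∀ N p q, p + q = N → ff A C p q ∈ sp S A C (N + 1) := by
  intro N
  induction N using Nat.strong_induction_on with
  | _ N ih =>
    rcases N with _ | _ | M
    · rintro p q hpq
      obtain ⟨rfl, rfl⟩ : p = 0 ∧ q = 0 := by omega
      rw [ff_zero]; exact gg_mem A C (by omega)
    · rintro p q hpq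
      rcases Nat.eq_zero_or_pos p with rfl | hp
      · rw [ff_symm, ff_zero]; exact gg_mem A C (by omega)
      · obtain ⟨rfl, rfl⟩ : p = 1 ∧ q = 0 := by omega
        rw [ff_zero]; exact gg_mem A C (by omega)
    · have hlow : ∀ p q, p + q ≤ M + 1 → ff A C p q ∈ sp S A C (M + 3) := fun p q h =>
        sp_mono A C (by omega) (ih (p + q) (by omega) p q rfl)
      set d := ff A C (M+1) 1 - ff A C (M+2) 0 with hd
      have claim : ∀ b a, a + b = M →
          ff A C (a+1) (b+1) - ff A C (a+2) b - d ∈ sp S A C (M + 3) := by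
        intro b
        induction b with
        | zero =>
          intro a ha
          obtain rfl : a = M := by omega
          simp [hd]
        | succ b ihb =>
          intro a ha
          have h1 := ihb (a+1) (by omega)
          have h2 := secdiff A C δ β hD2 (a+1) b
          have e : ff A C (a+1) (b+2) - ff A C (a+2) (b+1) - d
              = (ff A C (a+2) (b+1) - ff A C (a+3) b - d)
                + (δ • ff A C (a+1) b + β • (ff A C (a+2) b + ff A C (a+1) (b+1))) := by
            have h2' : ff A C (a+1) (b+2)
                = ff A C (a+2) (b+1) + ff A C (a+2) (b+1) + δ • ff A C (a+1) b
                  + β • (ff A C (a+2) b + ff A C (a+1) (b+1)) - ff A C (a+3) b := by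
              rw [← h2]; abel
            rw [h2']; abel
          rw [e]
          exact add_mem h1 (add_mem (Submodule.smul_mem _ _ (hlow _ _ (by omega)))
            (Submodule.smul_mem _ _ (add_mem (hlow _ _ (by omega)) (hlow _ _ (by omega)))))
      have tele : ∀ b a, a + b = M + 2 → b ≤ M + 1 →
          ff A C a b - ff A C (M+2) 0 - b • d ∈ sp S A C (M + 3) := by
        intro b
        induction b with
        | zero =>
          intro a h _
          obtain rfl : a = M + 2 := by omega
          simp
        | succ b ihb =>
          intro a h hb
          have hstep : ff A C a (b+1) - ff A C (a+1) b - d ∈ sp S A C (M + 3) := by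
            obtain ⟨a', rfl⟩ : ∃ a', a = a' + 1 := ⟨a - 1, by omega⟩
            exact claim b a' (by omega)
          have h2 := ihb (a+1) (by omega) (by omega)
          have e : ff A C a (b+1) - ff A C (M+2) 0 - (b+1) • d
              = (ff A C a (b+1) - ff A C (a+1) b - d)
                + (ff A C (a+1) b - ff A C (M+2) 0 - b • d) := by
            rw [succ_nsmul]; abel
          rw [e]; exact add_mem hstep h2
      have hFd : ff A C (M+1) 1 - ff A C (M+2) 0 - d = 0 := by rw [hd]; exact sub_self _
      have t3' : ff A C (M+1) 1 - ff A C (M+2) 0 - (M • d + d) ∈ sp S A C (M+3) := by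
        rw [← succ_nsmul]
        have t := tele (M+1) 1 (by omega) le_rfl
        rwa [ff_symm A C 1 (M+1)] at t
      have hMd : M • d ∈ sp S A C (M+3) := by
        have e : M • d = -(ff A C (M+1) 1 - ff A C (M+2) 0 - (M • d + d))
            + (ff A C (M+1) 1 - ff A C (M+2) 0 - d) := by abel
        rw [e, hFd, add_zero]
        exact neg_mem t3'
      have hs := secdiff A C δ β hD2 0 M
      simp only [zero_add] at hs
      rw [ff_symm A C 0 (M+2), ff_symm A C 1 (M+1)] at hs
      have hG : δ • ff A C 0 M + β • (ff A C 1 M + ff A C 0 (M+1)) ∈ sp S A C (M+3) :=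
        add_mem (Submodule.smul_mem _ _ (hlow _ _ (by omega)))
          (Submodule.smul_mem _ _ (add_mem (hlow _ _ (by omega)) (hlow _ _ (by omega))))
      have t2 := tele M 2 (by omega) (by omega)
      have hse0 : ff A C 2 M + ff A C (M+2) 0
          - (ff A C (M+1) 1 + ff A C (M+1) 1 + δ • ff A C 0 M
            + β • (ff A C 1 M + ff A C 0 (M+1))) = 0 := sub_eq_zero_of_eq hs
      have h2d : d + d ∈ sp S A C (M+3) := by
        have e2 : d + d = (ff A C 2 M - ff A C (M+2) 0 - M • d)
            - ((ff A C (M+1) 1 - ff A C (M+2) 0 - (M • d + d))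
              + (ff A C (M+1) 1 - ff A C (M+2) 0 - (M • d + d)))
            - (ff A C 2 M + ff A C (M+2) 0
              - (ff A C (M+1) 1 + ff A C (M+1) 1 + δ • ff A C 0 M
                + β • (ff A C 1 M + ff A C 0 (M+1))))
            - M • d - (δ • ff A C 0 M + β • (ff A C 1 M + ff A C 0 (M+1))) := by abel
        rw [e2, hse0, sub_zero]
        exact sub_mem (sub_mem (sub_mem t2 (add_mem t3' t3')) hMd) hG
      have hdmem : d ∈ sp S A C (M+3) := by
        have e3 : d = ⅟(2:S) • (d + d) := by rw [← two_smul S d, invOf_smul_smul]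
        rw [e3]
        exact Submodule.smul_mem _ _ h2d
      intro p q hpq
      by_cases hq : q ≤ M + 1
      · have t := tele q p (by omega) hq
        have e4 : ff A C p q = (ff A C p q - ff A C (M+2) 0 - q • d)
            + ff A C (M+2) 0 + q • d := by abel
        rw [e4]
        refine add_mem (add_mem t ?_) (nsmul_mem hdmem q)
        rw [ff_zero]; exact gg_mem A C (by omega)
      · obtain ⟨rfl, rfl⟩ : p = 0 ∧ q = M + 2 := by omega
        rw [ff_symm, ff_zero]
        exact gg_mem A C (by omega)


lemma anticomm_mem [Invertible (2 : S)] (A C : R) (δ β : S)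
    (hD2 : A * (A * C - C * A) - (A * C - C * A) * A = δ • C + β • (A * C + C * A))
    {n : ℕ} {x : R} (hx : x ∈ sp S A C n) : A * x + x * A ∈ sp S A C (n + 1) := by
  induction hx using Submodule.span_induction with
  | mem y hy =>
    obtain ⟨k, hk, rfl⟩ := hy
    have e : A * gg A C k + gg A C k * A = gg A C (k+1) + ff A C k 1 := by
      have e3 : ∀ a : ℕ, A ^ a * A = A ^ (a+1) := fun a => (pow_succ A a).symm
      have e4 : ∀ (a : ℕ) (x : R), A * (A ^ a * x) = A ^ (a+1) * x := by
        intro a x; rw [← mul_assoc, ← pow_succ']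
      simp only [gg, ff, pow_one, mul_add, add_mul, mul_assoc, e3, e4]
      abel
    rw [e]
    exact add_mem (gg_mem A C (by simpa using hk))
      (sp_mono A C (by simp at hk; omega) (memF A C δ β hD2 (k+1) k 1 rfl))
  | zero => simp only [mul_zero, zero_mul, add_zero]; exact zero_mem _
  | add u v _ _ hu hv =>
    have e : A * (u + v) + (u + v) * A = (A * u + u * A) + (A * v + v * A) := by noncomm_ring
    rw [e]; exact add_mem hu hv
  | smul c u _ hu =>
    have e : A * (c • u) + (c • u) * A = c • (A * u + u * A) := by
      rw [mul_smul_comm, smul_mul_assoc, smul_add]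
    rw [e]; exact Submodule.smul_mem _ _ hu

lemma hmem [Invertible (2 : S)] (A B C : R) (hC : C = A * B - B * A) (δ β : S)
    (hD2 : A * (A * C - C * A) - (A * C - C * A) * A = δ • C + β • (A * C + C * A)) :
    ∀ r i, 1 ≤ i → A ^ i * B * A ^ (i + r) - A ^ (i + r) * B * A ^ i ∈ sp S A C (2 * i + r) := by
  intro r
  induction r using Nat.strong_induction_on with
  | _ r ih =>
    rcases r with _ | _ | s
    · intro i hi
      simp only [Nat.add_zero, sub_self]
      exact zero_mem _
    · intro i hi
      have e : A ^ i * B * A ^ (i + 1) - A ^ (i + 1) * B * A ^ i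
          = -(⅟(2:S) • ff A C i i) := by
        have e1 : ff A C i i = (2 : S) • (A ^ i * C * A ^ i) := by
          rw [two_smul]; rfl
        rw [e1, invOf_smul_smul, hC]
        have e3 : ∀ a : ℕ, A ^ a * A = A ^ (a+1) := fun a => (pow_succ A a).symm
        have e4 : ∀ (a : ℕ) (x : R), A * (A ^ a * x) = A ^ (a+1) * x := by
          intro a x; rw [← mul_assoc, ← pow_succ']
        have e2 : ∀ a : ℕ, A * A ^ a = A ^ (a+1) := fun a => (pow_succ' A a).symm
        have e5 : ∀ (a : ℕ) (x : R), A ^ a * (A * x) = A ^ (a+1) * x := by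
          intro a x; rw [← mul_assoc, ← pow_succ]
        simp only [mul_sub, sub_mul, neg_sub, mul_assoc, e2, e3, e4, e5]
      rw [e]
      refine neg_mem (Submodule.smul_mem _ _ ?_)
      have := memF A C δ β hD2 (2 * i) i i (by omega)
      exact sp_mono A C (by omega) this
    · intro i hi
      have h1 := ih (s + 1) (by omega) i hi
      have h2 := ih s (by omega) (i + 1) (by omega)
      have h3 := anticomm_mem A C δ β hD2 h1
      have e : A ^ i * B * A ^ (i + (s + 2)) - A ^ (i + (s + 2)) * B * A ^ i
          = (A * (A ^ i * B * A ^ (i + (s + 1)) - A ^ (i + (s + 1)) * B * A ^ i)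
              + (A ^ i * B * A ^ (i + (s + 1)) - A ^ (i + (s + 1)) * B * A ^ i) * A)
            - (A ^ (i + 1) * B * A ^ (i + (s + 1)) - A ^ (i + (s + 1)) * B * A ^ (i + 1)) := by
        have e3 : ∀ a : ℕ, A ^ a * A = A ^ (a+1) := fun a => (pow_succ A a).symm
        have e4 : ∀ (a : ℕ) (x : R), A * (A ^ a * x) = A ^ (a+1) * x := by
          intro a x; rw [← mul_assoc, ← pow_succ']
        simp only [mul_sub, sub_mul, mul_assoc, e3, e4,
          show i + (s + 1) + 1 = i + (s + 2) by omega]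
        abel
      rw [show (i+1) + s = i + (s+1) by omega] at h2
      rw [show 2 * i + (s + 2) = (2 * i + (s+1)) + 1 by omega, e]
      exact sub_mem h3 (sp_mono A C (by omega) h2)


lemma span_to_sum (g : ℕ → R) (n : ℕ) (x : R)
    (hx : x ∈ Submodule.span S (g '' Set.Iio n)) :
    ∃ W : ℕ → S, x = ∑ k ∈ Finset.range n, W k • g k := by
  have himg : g '' Set.Iio n = Set.range (fun k : Fin n => g k) := by
    ext y
    simp only [Set.mem_image, Set.mem_Iio, Set.mem_range]
    constructor
    · rintro ⟨m, hm, rfl⟩; exact ⟨⟨m, hm⟩, rfl⟩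
    · rintro ⟨⟨m, hm⟩, rfl⟩; exact ⟨m, hm, rfl⟩
  rw [himg] at hx
  obtain ⟨c, hc⟩ := (Submodule.mem_span_range_iff_exists_fun S).mp hx
  refine ⟨fun k => if h : k < n then c ⟨k, h⟩ else 0, ?_⟩
  rw [← hc, Finset.sum_range fun k => _]
  · exact (Finset.sum_congr rfl fun ⟨m, hm⟩ _ => by simp [hm]).symm

lemma derive_hD2 {A B C : R} (hC : C = A * B - B * A) {L : ℕ} {α : ℕ → S} {δ ε β : S}
    (hrel : A * C - C * A =
      ∑ i ∈ Finset.Icc 1 (L + 1), α i • A ^ i + δ • B + ε • (1 : R) + β • (A * B + B * A)) :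
    A * (A * C - C * A) - (A * C - C * A) * A = δ • C + β • (A * C + C * A) := by
  set P : R := ∑ i ∈ Finset.Icc 1 (L + 1), α i • A ^ i with hP
  have hPA : A * P = P * A := by
    rw [hP, Finset.mul_sum, Finset.sum_mul]
    exact Finset.sum_congr rfl fun k _ => by
      rw [mul_smul_comm, smul_mul_assoc, ← pow_succ, ← pow_succ']
  rw [hrel, hC]
  simp only [mul_add, add_mul, mul_sub, sub_mul, mul_smul_comm, smul_mul_assoc,
    mul_one, one_mul, smul_add, smul_sub, mul_assoc]
  rw [hPA]
  abel

end Stmt7Aux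


/-- Corollary 3 of the paper: if `2` is invertible in `S` and `[A,C]` satisfies the quadratic
relation, then for all `i, j ≥ 1` there are scalars `W_0, …, W_{i+j-1}` with
`A^i B A^j - A^j B A^i = Σ_{k=0}^{i+j-1} W_k {A^k, C}`. -/
theorem stmt7 {S R : Type*} [CommRing S] [Ring R] [Algebra S R] [Invertible (2 : S)]
    (A B C : R) (hC : C = A * B - B * A) (L : ℕ) (α : ℕ → S) (δ ε β : S)
    (hrel : A * C - C * A =
      ∑ i ∈ Finset.Icc 1 (L + 1), α i • A ^ i + δ • B + ε • (1 : R) + β • (A * B + B * A))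
    (i j : ℕ) (hi : 1 ≤ i) (hj : 1 ≤ j) :
    ∃ W : ℕ → S,
      A ^ i * B * A ^ j - A ^ j * B * A ^ i =
        ∑ k ∈ Finset.range (i + j), W k • (A ^ k * C + C * A ^ k) := by
  have hD2 := Stmt7Aux.derive_hD2 hC hrel
  have main : A ^ i * B * A ^ j - A ^ j * B * A ^ i ∈ Stmt7Aux.sp S A C (i + j) := by
    rcases le_total i j with h | h
    · obtain ⟨r, rfl⟩ : ∃ r, j = i + r := ⟨j - i, by omega⟩
      have hm := Stmt7Aux.hmem A B C hC δ β hD2 r i hi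
      exact Stmt7Aux.sp_mono A C (by omega) hm
    · obtain ⟨r, rfl⟩ : ∃ r, i = j + r := ⟨i - j, by omega⟩
      have hm := Stmt7Aux.hmem A B C hC δ β hD2 r j hj
      have := neg_mem hm
      rw [neg_sub] at this
      exact Stmt7Aux.sp_mono A C (by omega) this
  exact Stmt7Aux.span_to_sum (Stmt7Aux.gg A C) (i + j) _ main
end

section
/- Let S be a commutative ring, R an associative S-algebra, A, B ∈ R, C := AB − BA, and suppose that for scalars α_1,…,α_{L+1}, δ, ε, β, λ_1,…,λ_M, η, ω_1,…,ω_L, ζ ∈ S one has AC − CA = Σ_{i=1}^{L+1} α_i A^i + δ·B + ε·1 + β·(AB+BA) and BC − CB = Σ_{i=1}^{M} λ_i A^i − β·B² + η·B + Σ_{i=1}^{L} ω_i·(A^i B + B A^i) + ζ·1. Then η·C + Σ_{i=1}^{L} ω_i·(A^i C + C A^i) + Σ_{k=1}^{L+1} α_k·(A^k B − B A^k) = 0. -/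
/-- Proposition 4 of the paper: given the commutation relations of the polynomial Lie
algebra `L_M`, the constraint
`η C + Σ_{i=1}^{L} ω_i {A^i,C} + Σ_{k=1}^{L+1} α_k [A^k,B] = 0` holds. -/
theorem stmt8 {S R : Type*} [CommRing S] [Ring R] [Algebra S R]
    (M : ℕ) (hM : 1 ≤ M) (L : ℕ) (hL : L = M / 2)
    (A B C : R) (hC : C = A * B - B * A)
    (α lam ω : ℕ → S) (δ ε β η ζ : S)
    (hAC : A * C - C * A =
      ∑ i ∈ Finset.Icc 1 (L + 1), α i • A ^ i + δ • B + ε • (1 : R) + β • (A * B + B * A))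
    (hBC : B * C - C * B =
      ∑ i ∈ Finset.Icc 1 M, lam i • A ^ i - β • B ^ 2 + η • B
        + ∑ i ∈ Finset.Icc 1 L, ω i • (A ^ i * B + B * A ^ i) + ζ • (1 : R)) :
    η • C + ∑ i ∈ Finset.Icc 1 L, ω i • (A ^ i * C + C * A ^ i)
      + ∑ k ∈ Finset.Icc 1 (L + 1), α k • (A ^ k * B - B * A ^ k) = 0 := by
  subst hC
  set X := ∑ i ∈ Finset.Icc 1 M, lam i • A ^ i - β • B ^ 2 + η • B
        + ∑ i ∈ Finset.Icc 1 L, ω i • (A ^ i * B + B * A ^ i) + ζ • (1 : R) with hX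
  set Y := ∑ i ∈ Finset.Icc 1 (L + 1), α i • A ^ i + δ • B + ε • (1 : R)
        + β • (A * B + B * A) with hY
  have hpow : ∀ i : ℕ, A * A ^ i = A ^ i * A := fun i => by
    rw [← pow_succ, ← pow_succ']
  have h1 : A * (∑ i ∈ Finset.Icc 1 M, lam i • A ^ i)
      = (∑ i ∈ Finset.Icc 1 M, lam i • A ^ i) * A := by
    rw [Finset.mul_sum, Finset.sum_mul]
    exact Finset.sum_congr rfl fun i _ => by rw [mul_smul_comm, smul_mul_assoc, hpow i]
  have h2 : A * (∑ i ∈ Finset.Icc 1 L, ω i • (A ^ i * B + B * A ^ i))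
      - (∑ i ∈ Finset.Icc 1 L, ω i • (A ^ i * B + B * A ^ i)) * A
      = ∑ i ∈ Finset.Icc 1 L, ω i • (A ^ i * (A * B - B * A) + (A * B - B * A) * A ^ i) := by
    rw [Finset.mul_sum, Finset.sum_mul, ← Finset.sum_sub_distrib]
    refine Finset.sum_congr rfl fun i _ => ?_
    rw [mul_smul_comm, smul_mul_assoc, ← smul_sub]
    congr 1
    simp only [mul_add, add_mul, mul_sub, sub_mul, ← mul_assoc, ← pow_succ, ← pow_succ']
    rw [mul_assoc B A (A ^ i), hpow i]; simp only [← mul_assoc]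
    abel
  have h3 : B * (∑ i ∈ Finset.Icc 1 (L + 1), α i • A ^ i)
      - (∑ i ∈ Finset.Icc 1 (L + 1), α i • A ^ i) * B
      = - ∑ k ∈ Finset.Icc 1 (L + 1), α k • (A ^ k * B - B * A ^ k) := by
    rw [Finset.mul_sum, Finset.sum_mul, ← Finset.sum_sub_distrib, ← Finset.sum_neg_distrib]
    refine Finset.sum_congr rfl fun i _ => ?_
    rw [mul_smul_comm, smul_mul_assoc, ← smul_sub, ← smul_neg, neg_sub]
  have key : A * X - X * A - (B * Y - Y * B) = 0 := by
    rw [← hBC, ← hAC]; noncomm_ring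
  have assemble : A * X - X * A - (B * Y - Y * B)
      = (A * (∑ i ∈ Finset.Icc 1 M, lam i • A ^ i)
          - (∑ i ∈ Finset.Icc 1 M, lam i • A ^ i) * A)
        + (A * (∑ i ∈ Finset.Icc 1 L, ω i • (A ^ i * B + B * A ^ i))
          - (∑ i ∈ Finset.Icc 1 L, ω i • (A ^ i * B + B * A ^ i)) * A)
        - (B * (∑ i ∈ Finset.Icc 1 (L + 1), α i • A ^ i)
          - (∑ i ∈ Finset.Icc 1 (L + 1), α i • A ^ i) * B)
        + η • (A * B - B * A) := by
    rw [hX, hY]; simp only [smul_add, smul_sub]; noncomm_ring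
  calc η • (A * B - B * A)
        + ∑ i ∈ Finset.Icc 1 L, ω i • (A ^ i * (A * B - B * A) + (A * B - B * A) * A ^ i)
        + ∑ k ∈ Finset.Icc 1 (L + 1), α k • (A ^ k * B - B * A ^ k)
      = A * X - X * A - (B * Y - Y * B) := by rw [assemble, h1, h2, h3]; abel
    _ = 0 := key
end

section
/- Let S be a commutative ring, R an associative S-algebra, A, B ∈ R, C := AB − BA, and suppose AC − CA = Σ_{i=1}^{L+1} α_i A^i + δ·B + ε·1 + β·(AB+BA) for scalars α_i, δ, ε, β ∈ S. Suppose in addition that scalars η, ω_1, …, ω_L ∈ S satisfy the constraint η·C + Σ_{i=1}^{L} ω_i·(A^i C + C A^i) + Σ_{k=1}^{L+1} α_k·(A^k B − B A^k) = 0. Then for arbitrary scalars k_1, …, k_{M+1} ∈ S, the element K := C² − Σ_{i=1}^{L+1} α_i·(A^i B + B A^i) − β·Σ_{i=1}^{L} ω_i·(A^i B + B A^i) − β·(A B² + B² A) + Σ_{i=1}^{M+1} k_i A^i − (2ε + βη)·B + (β² − δ)·B² satisfies AK − KA = 0. -/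
/-- Given the relation for `[A,C]` and the constraint on the structure constants, the
candidate Casimir `K` commutes with `A` for arbitrary scalars `k_1, …, k_{M+1}`. -/
theorem stmt10 {S R : Type*} [CommRing S] [Ring R] [Algebra S R]
    (M : ℕ) (hM : 1 ≤ M) (L : ℕ) (hL : L = M / 2)
    (A B C : R) (hC : C = A * B - B * A)
    (α ω : ℕ → S) (δ ε β η : S)
    (hAC : A * C - C * A =
      ∑ i ∈ Finset.Icc 1 (L + 1), α i • A ^ i + δ • B + ε • (1 : R) + β • (A * B + B * A))
    (hconstraint : η • C + ∑ i ∈ Finset.Icc 1 L, ω i • (A ^ i * C + C * A ^ i)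
      + ∑ k ∈ Finset.Icc 1 (L + 1), α k • (A ^ k * B - B * A ^ k) = 0)
    (k : ℕ → S) (K : R)
    (hK : K = C ^ 2 - ∑ i ∈ Finset.Icc 1 (L + 1), α i • (A ^ i * B + B * A ^ i)
      - β • ∑ i ∈ Finset.Icc 1 L, ω i • (A ^ i * B + B * A ^ i)
      - β • (A * B ^ 2 + B ^ 2 * A)
      + ∑ i ∈ Finset.Icc 1 (M + 1), k i • A ^ i
      - (2 * ε + β * η) • B + (β ^ 2 - δ) • B ^ 2) :
    A * K - K * A = 0 := by
  have conv : ∀ (f : ℕ → S) (n : ℕ) (X : R),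
      (∑ i ∈ Finset.Icc 1 n, f i • (A ^ i * X + X * A ^ i)) =
      (∑ i ∈ Finset.Icc 1 n, f i • A ^ i) * X + X * (∑ i ∈ Finset.Icc 1 n, f i • A ^ i) := by
    intro f n X
    rw [Finset.sum_mul, Finset.mul_sum, ← Finset.sum_add_distrib]
    refine Finset.sum_congr rfl fun i _ => ?_
    rw [smul_add, smul_mul_assoc, mul_smul_comm]
  have convs : ∀ (f : ℕ → S) (n : ℕ) (X : R),
      (∑ i ∈ Finset.Icc 1 n, f i • (A ^ i * X - X * A ^ i)) =
      (∑ i ∈ Finset.Icc 1 n, f i • A ^ i) * X - X * (∑ i ∈ Finset.Icc 1 n, f i • A ^ i) := by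
    intro f n X
    rw [Finset.sum_mul, Finset.mul_sum, ← Finset.sum_sub_distrib]
    refine Finset.sum_congr rfl fun i _ => ?_
    rw [smul_sub, smul_mul_assoc, mul_smul_comm]
  set P := ∑ i ∈ Finset.Icc 1 (L + 1), α i • A ^ i with hP
  set Q := ∑ i ∈ Finset.Icc 1 L, ω i • A ^ i with hQ
  set T := ∑ i ∈ Finset.Icc 1 (M + 1), k i • A ^ i with hT
  have comA : ∀ (f : ℕ → S) (n : ℕ),
      A * (∑ i ∈ Finset.Icc 1 n, f i • A ^ i) - (∑ i ∈ Finset.Icc 1 n, f i • A ^ i) * A = 0 := by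
    intro f n
    have : Commute A (∑ i ∈ Finset.Icc 1 n, f i • A ^ i) :=
      Commute.sum_right _ _ _ fun i _ => ((Commute.refl A).pow_right i).smul_right _
    rw [this.eq, sub_self]
  have hPA : A * P - P * A = 0 := by rw [hP]; exact comA α _
  have hQA : A * Q - Q * A = 0 := by rw [hQ]; exact comA ω _
  have hTA : A * T - T * A = 0 := by rw [hT]; exact comA k _
  have hs1 : (∑ i ∈ Finset.Icc 1 (L + 1), α i • (A ^ i * B + B * A ^ i)) = P * B + B * P := by
    rw [hP]; exact conv α _ B
  have hs2 : (∑ i ∈ Finset.Icc 1 L, ω i • (A ^ i * B + B * A ^ i)) = Q * B + B * Q := by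
    rw [hQ]; exact conv ω _ B
  have hs3 : (∑ i ∈ Finset.Icc 1 L, ω i • (A ^ i * C + C * A ^ i)) = Q * C + C * Q := by
    rw [hQ]; exact conv ω _ C
  have hs4 : (∑ j ∈ Finset.Icc 1 (L + 1), α j • (A ^ j * B - B * A ^ j)) = P * B - B * P := by
    rw [hP]; exact convs α _ B
  rw [hs3, hs4] at hconstraint
  rw [hs1, hs2] at hK
  have hE : A * C - C * A - (P + δ • B + ε • (1 : R) + β • (A * B + B * A)) = 0 :=
    sub_eq_zero.mpr hAC
  have main : A * K - K * A =
      (A * C - C * A - (P + δ • B + ε • (1 : R) + β • (A * B + B * A))) * C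
      + C * (A * C - C * A - (P + δ • B + ε • (1 : R) + β • (A * B + B * A)))
      + β • (B * (A * C - C * A - (P + δ • B + ε • (1 : R) + β • (A * B + B * A)))
             - (A * C - C * A - (P + δ • B + ε • (1 : R) + β • (A * B + B * A))) * B)
      - β • (η • C + (Q * C + C * Q) + (P * B - B * P))
      - ((A * P - P * A) * B + B * (A * P - P * A))
      - β • ((A * Q - Q * A) * B + B * (A * Q - Q * A))
      + (A * T - T * A) := by
    rw [hK, hC]
    simp only [smul_add, smul_sub, mul_add, add_mul, mul_sub, sub_mul, smul_mul_assoc,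
      mul_smul_comm, smul_smul, mul_one, one_mul, mul_assoc, pow_two]
    module
  rw [main, hE, hconstraint, hPA, hQA, hTA]
  simp
end

section
/- Let R be a Poisson ring over a commutative ring S, and let A, B, C ∈ R with ⁅A,B⁆ = C. Suppose that for scalars α_1,…,α_{L+1}, δ, ε, β, λ_1,…,λ_M, ρ, η, ω_1,…,ω_L, ζ ∈ S one has ⁅A,C⁆ = Σ_{i=1}^{L+1} α_i A^i + δ·B + ε·1 + 2β·AB and ⁅B,C⁆ = Σ_{i=1}^{M} λ_i A^i + ρ·B² + η·B + Σ_{i=1}^{L} 2ω_i·A^i B + ζ·1. Then 2(ρ + β)·BC + (η + α_1)·C + Σ_{i=1}^{L} (2ω_i + (i+1)α_{i+1})·A^i C = 0. -/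
/-- A Poisson ring over a commutative ring `S`: a commutative `S`-algebra `R` that is
simultaneously a Lie ring whose `S`-bilinear bracket satisfies the Leibniz rule. -/
structure PoissonBracket (S R : Type*) [CommRing S] [CommRing R] [Algebra S R] where
  br : R → R → R
  add_left : ∀ x y z : R, br (x + y) z = br x z + br y z
  add_right : ∀ x y z : R, br x (y + z) = br x y + br x z
  smul_left : ∀ (s : S) (x y : R), br (s • x) y = s • br x y
  smul_right : ∀ (s : S) (x y : R), br x (s • y) = s • br x y
  lie_self : ∀ x : R, br x x = 0
  jacobi : ∀ x y z : R, br x (br y z) + br y (br z x) + br z (br x y) = 0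
  leibniz : ∀ x y z : R, br x (y * z) = br x y * z + y * br x z

/-- Proposition 1 (classical) of the paper: the Jacobi identity imposes the linear
relations `η = -α₁`, `ρ = -β`, `2ω_i = -(i+1)α_{i+1}` on the structure constants of the
polynomial Poisson algebra, expressed here as a single vanishing combination. -/
theorem stmt15 {S R : Type*} [CommRing S] [CommRing R] [Algebra S R]
    (P : PoissonBracket S R)
    (M : ℕ) (hM : 1 ≤ M) (L : ℕ) (hL : L = M / 2)
    (A B C : R) (hC : P.br A B = C)
    (α lam ω : ℕ → S) (δ ε β ρ η ζ : S)
    (hAC : P.br A C =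
      ∑ i ∈ Finset.Icc 1 (L + 1), α i • A ^ i + δ • B + ε • (1 : R) + (2 * β) • (A * B))
    (hBC : P.br B C =
      ∑ i ∈ Finset.Icc 1 M, lam i • A ^ i + ρ • B ^ 2 + η • B
        + ∑ i ∈ Finset.Icc 1 L, (2 * ω i) • (A ^ i * B) + ζ • (1 : R)) :
    (2 * (ρ + β)) • (B * C) + (η + α 1) • C
      + ∑ i ∈ Finset.Icc 1 L, (2 * ω i + ((i : S) + 1) * α (i + 1)) • (A ^ i * C) = 0 := by
  -- basic consequences of the axioms
  have hbr0 : ∀ x : R, P.br x 0 = 0 := by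
    intro x
    have h := P.add_right x 0 0
    rw [add_zero] at h
    linear_combination -h
  have hanti : ∀ x y : R, P.br y x = -P.br x y := by
    intro x y
    have h := P.lie_self (x + y)
    rw [P.add_left, P.add_right, P.add_right, P.lie_self, P.lie_self] at h
    linear_combination h
  have hneg : ∀ x y : R, P.br x (-y) = -P.br x y := by
    intro x y
    have h := P.add_right x y (-y)
    rw [add_neg_cancel, hbr0] at h
    linear_combination -h
  have hone : ∀ x : R, P.br x (1 : R) = 0 := by
    intro x
    have h := P.leibniz x 1 1
    rw [mul_one, one_mul] at h
    linear_combination -h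
  have hsum : ∀ (x : R) (s : Finset ℕ) (f : ℕ → R),
      P.br x (∑ i ∈ s, f i) = ∑ i ∈ s, P.br x (f i) := by
    intro x s f
    induction s using Finset.cons_induction with
    | empty => simpa using hbr0 x
    | cons a s ha ih => rw [Finset.sum_cons, Finset.sum_cons, P.add_right, ih]
  have hpow : ∀ (x y : R) (n : ℕ),
      P.br x (y ^ (n + 1)) = ((n : R) + 1) * (y ^ n * P.br x y) := by
    intro x y n
    induction n with
    | zero => simp [pow_one]
    | succ n ih =>
      rw [pow_succ, P.leibniz, ih]
      push_cast
      ring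
  have hAA : ∀ n : ℕ, P.br A (A ^ n) = 0 := by
    intro n
    cases n with
    | zero => simpa using hone A
    | succ n => rw [hpow, P.lie_self]; ring
  have hBA : P.br B A = -C := by rw [hanti, hC]
  have hAiB : ∀ i : ℕ, P.br A (A ^ i * B) = A ^ i * C := by
    intro i
    rw [P.leibniz, hAA, hC, zero_mul, zero_add]
  have hB2 : P.br A (B ^ 2) = 2 * (B * C) := by
    have h := hpow A B 1
    rw [hC] at h
    norm_num at h
    linear_combination h
  -- the Jacobi identity applied to (A, B, C)
  have key : P.br A (P.br B C) = P.br B (P.br A C) := by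
    have j := P.jacobi A B C
    rw [hC, P.lie_self, hanti A C, hneg] at j
    linear_combination j
  have hBB' : P.br B (A * B) = -(C * B) := by
    rw [P.leibniz, hBA, P.lie_self, mul_zero, add_zero, neg_mul]
  have X1 : P.br A (P.br B C)
      = ρ • (2 * (B * C)) + η • C + ∑ i ∈ Finset.Icc 1 L, (2 * ω i) • (A ^ i * C) := by
    rw [hBC]
    simp only [P.add_right, hsum, P.smul_right, hAA, hAiB, hone, hC, smul_zero,
      Finset.sum_const_zero, zero_add, add_zero, hB2]
  have X2 : P.br B (P.br A C)
      = ∑ i ∈ Finset.Icc 1 (L + 1), α i • P.br B (A ^ i) + (2 * β) • (-(C * B)) := by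
    rw [hAC]
    simp only [P.add_right, hsum, P.smul_right, hone, P.lie_self, smul_zero, add_zero, hBB',
      P.leibniz, hBA, mul_zero, neg_mul]
  have hBAi : ∀ i : ℕ, P.br B (A ^ (1 + i)) = -(((i : R) + 1) * (A ^ i * C)) := by
    intro i
    rw [add_comm 1 i, hpow, hBA]
    ring
  have S2 : ∑ i ∈ Finset.Icc 1 (L + 1), α i • P.br B (A ^ i)
      = -(α 1 • C) - ∑ i ∈ Finset.Icc 1 L, (((i : S) + 1) * α (i + 1)) • (A ^ i * C) := by
    rw [← Finset.Ico_add_one_right_eq_Icc, ← Finset.Ico_add_one_right_eq_Icc,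
      Finset.sum_Ico_eq_sum_range, Finset.sum_Ico_eq_sum_range]
    norm_num
    rw [Finset.sum_range_succ']
    simp only [hBAi]
    have hterm : ∀ x : ℕ, α (1 + (x + 1)) • -((((x + 1 : ℕ) : R) + 1) * (A ^ (x + 1) * C))
        = -(((1 + (x : S) + 1) * α (1 + x + 1)) • (A ^ (1 + x) * C)) := by
      intro x
      simp only [smul_neg, Algebra.smul_def, map_mul, map_add, map_one, map_natCast]
      push_cast
      ring
    have hsum2 : ∑ x ∈ Finset.range L, α (1 + (x + 1)) • -((((x + 1 : ℕ) : R) + 1) * (A ^ (x + 1) * C))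
        = -∑ x ∈ Finset.range L, ((1 + (x : S) + 1) * α (1 + x + 1)) • (A ^ (1 + x) * C) := by
      rw [← Finset.sum_neg_distrib]
      exact Finset.sum_congr rfl fun x _ => hterm x
    rw [hsum2]
    simp only [Nat.cast_zero, zero_add, pow_zero, one_mul, mul_one, smul_neg, Nat.add_zero]
    abel
  have S1 : ∑ i ∈ Finset.Icc 1 L, (2 * ω i + ((i : S) + 1) * α (i + 1)) • (A ^ i * C)
      = ∑ i ∈ Finset.Icc 1 L, (2 * ω i) • (A ^ i * C)
        + ∑ i ∈ Finset.Icc 1 L, (((i : S) + 1) * α (i + 1)) • (A ^ i * C) := by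
    rw [← Finset.sum_add_distrib]
    exact Finset.sum_congr rfl fun i _ => add_smul _ _ _
  have E : ρ • (2 * (B * C)) + η • C + ∑ i ∈ Finset.Icc 1 L, (2 * ω i) • (A ^ i * C)
      = (-(α 1 • C) - ∑ i ∈ Finset.Icc 1 L, (((i : S) + 1) * α (i + 1)) • (A ^ i * C))
        + (2 * β) • -(C * B) := by
    rw [← X1, ← S2, ← X2]
    exact key
  rw [S1]
  simp only [Algebra.smul_def, map_mul, map_add, map_ofNat, smul_neg] at E ⊢
  linear_combination E
end

section
/- Let R be a Poisson ring over a commutative ℚ-algebra S, and let A, B, C ∈ R with ⁅A,B⁆ = C. Suppose that for scalars α_1,…,α_{L+1}, δ, ε, β, λ_1,…,λ_M, ζ ∈ S one has ⁅A,C⁆ = Σ_{i=1}^{L+1} α_i A^i + δ·B + ε·1 + 2β·AB and ⁅B,C⁆ = Σ_{i=1}^{M} λ_i A^i − β·B² − α_1·B − Σ_{i=1}^{L} (i+1)α_{i+1}·A^i B + ζ·1. Then the element K := C² − Σ_{i=1}^{L+1} 2α_i·A^i B − 2β·A B² + 2ζ·A + Σ_{i=1}^{M} (2/(i+1))·λ_i·A^{i+1}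 − 2ε·B − δ·B² satisfies ⁅K,A⁆ = 0 and ⁅K,B⁆ = 0. -/
namespace PoissonBracket

variable {S R : Type*} [CommRing S] [CommRing R] [Algebra S R] (P : PoissonBracket S R)

lemma br_skew (x y : R) : -P.br y x = P.br x y := by
  have h := P.lie_self (x + y)
  rw [P.add_left, P.add_right, P.add_right, P.lie_self, P.lie_self] at h
  linear_combination -h

def hamiltonian (x : R) : Derivation S R R :=
  Derivation.mk' ⟨⟨P.br x, P.add_right x⟩, fun s y => P.smul_right s x y⟩ fun y z => by
    simp only [LinearMap.coe_mk, AddHom.coe_mk, smul_eq_mul, P.leibniz]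
    ring

@[simp]
lemma hamiltonian_apply (x y : R) : P.hamiltonian x y = P.br x y := rfl

end PoissonBracket

lemma Finset.sum_Icc_one_add_one {M : Type*} [AddCommMonoid M] (f : ℕ → M) (n : ℕ) :
    ∑ i ∈ Icc 1 (n + 1), f i = f 1 + ∑ i ∈ Icc 1 n, f (i + 1) := by
  rw [← insert_Icc_add_one_left_eq_Icc (by omega), sum_insert (by simp),
    ← map_add_right_Icc 1 n 1, sum_map]
  rfl

/-- `K`, with `a` standing for `Σ α_i A^i` and `m` for `Σ (2/(i+1)) λ_i A^{i+1}`. -/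
def casimir {S R : Type*} [CommRing S] [CommRing R] [Algebra S R] (A B C a m : R) (β δ ε ζ : S) :
    R :=
  C ^ 2 - (2 : S) • (a * B) - (2 * β) • (A * B ^ 2) + (2 * ζ) • A + m - (2 * ε) • B - δ • B ^ 2

lemma natCast_succ_mul_div_smul {S : Type*} [CommRing S] [Algebra ℚ S] (n : ℕ) (q : ℚ) (s : S) :
    ((n + 1 : ℕ) : S) * ((q / ((n : ℚ) + 1)) • s) = q • s := by
  rw [← nsmul_eq_mul, ← smul_assoc, nsmul_eq_mul]
  push_cast
  rw [mul_div_cancel₀ _ (by positivity)]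

namespace Derivation

variable {S R : Type*} [CommRing S] [CommRing R] [Algebra S R] (D : Derivation S R R)

lemma map_sum_smul_pow (s : Finset ℕ) (c : ℕ → S) (e : ℕ → ℕ) (x : R) :
    D (∑ i ∈ s, c i • x ^ e i) = (∑ i ∈ s, (e i * c i) • x ^ (e i - 1)) * D x := by
  simp only [map_sum, map_smul, leibniz_pow, Finset.sum_mul]
  refine Finset.sum_congr rfl fun i _ => ?_
  simp only [smul_eq_mul, nsmul_eq_mul]
  simp only [Algebra.smul_def, map_mul]
  push_cast
  ring

lemma map_casimir_of_map_A_eq_zero {A B C a m : R} {β δ ε ζ : S} (hA : D A = 0) (hB : D B = C)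
    (hC : D C = a + δ • B + ε • (1 : R) + (2 * β) • (A * B)) (ha : D a = 0) (hm : D m = 0) :
    D (casimir A B C a m β δ ε ζ) = 0 := by
  simp only [casimir, map_sub, map_add, map_smul, leibniz, leibniz_pow, hA, hB, hC, ha, hm,
    smul_eq_mul]
  simp only [Algebra.smul_def, map_mul, map_ofNat]
  ring

lemma map_casimir_of_map_B_eq_zero {A B C a b l m : R} {α₁ β δ ε ζ : S} (hA : D A = -C)
    (hB : D B = 0) (hC : D C = l - β • B ^ 2 - α₁ • B - b * B + ζ • (1 : R))
    (ha : D a = (α₁ • 1 + b) * D A) (hm : D m = 2 * l * D A) :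
    D (casimir A B C a m β δ ε ζ) = 0 := by
  simp only [casimir, map_sub, map_add, map_smul, leibniz, leibniz_pow, hA, hB, hC, ha, hm,
    smul_eq_mul]
  simp only [Algebra.smul_def, map_mul, map_ofNat]
  ring

end Derivation

theorem stmt16_general {S R : Type*} [CommRing S] [Algebra ℚ S] [CommRing R] [Algebra S R]
    (P : PoissonBracket S R)
    (M : ℕ) (L : ℕ)
    (A B C : R) (hC : P.br A B = C)
    (α lam : ℕ → S) (δ ε β ζ : S)
    (hAC : P.br A C =
      ∑ i ∈ Finset.Icc 1 (L + 1), α i • A ^ i + δ • B + ε • (1 : R) + (2 * β) • (A * B))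
    (hBC : P.br B C =
      ∑ i ∈ Finset.Icc 1 M, lam i • A ^ i - β • B ^ 2 - α 1 • B
        - ∑ i ∈ Finset.Icc 1 L, (((i : S) + 1) * α (i + 1)) • (A ^ i * B) + ζ • (1 : R))
    (K : R)
    (hK : K = C ^ 2 - ∑ i ∈ Finset.Icc 1 (L + 1), (2 * α i) • (A ^ i * B)
      - (2 * β) • (A * B ^ 2) + (2 * ζ) • A
      + ∑ i ∈ Finset.Icc 1 M, ((2 / ((i : ℚ) + 1)) • lam i) • A ^ (i + 1)
      - (2 * ε) • B - δ • B ^ 2) :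
    P.br K A = 0 ∧ P.br K B = 0 := by
  set a := ∑ i ∈ Finset.Icc 1 (L + 1), α i • A ^ i
  set m := ∑ i ∈ Finset.Icc 1 M, ((2 / ((i : ℚ) + 1)) • lam i) • A ^ (i + 1)
  have hK' : K = casimir A B C a m β δ ε ζ := by
    rw [hK, casimir]
    simp only [a, Finset.mul_sum, Finset.sum_mul, Algebra.smul_def, map_mul, map_ofNat, mul_assoc]
  rw [hK', ← P.br_skew _ A, ← P.br_skew _ B, neg_eq_zero, neg_eq_zero, ← P.hamiltonian_apply A,
    ← P.hamiltonian_apply B]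
  constructor
  · refine Derivation.map_casimir_of_map_A_eq_zero (P.hamiltonian A) (P.lie_self A) hC hAC ?_ ?_
    <;> rw [Derivation.map_sum_smul_pow, P.hamiltonian_apply, P.lie_self, mul_zero]
  · have hBA : P.br B A = -C := by rw [← P.br_skew, hC]
    simp only [← smul_mul_assoc, ← Finset.sum_mul] at hBC
    refine Derivation.map_casimir_of_map_B_eq_zero (P.hamiltonian B) hBA (P.lie_self B) hBC ?_ ?_
    · rw [Derivation.map_sum_smul_pow, Finset.sum_Icc_one_add_one]
      push_cast
      simp only [one_mul, pow_zero]
    · rw [Derivation.map_sum_smul_pow, Finset.mul_sum]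
      congr 1
      refine Finset.sum_congr rfl fun i _ => ?_
      rw [natCast_succ_mul_div_smul, add_tsub_cancel_right, two_smul ℚ, two_mul, add_smul]

/-- Proposition 2 of the paper: the Casimir element
`K = C² - Σ 2α_i A^i B - 2β A B² + 2ζ A + Σ (2/(i+1)) λ_i A^{i+1} - 2ε B - δ B²`
Poisson-commutes with `A` and `B`. -/
theorem stmt16 {S R : Type*} [CommRing S] [Algebra ℚ S] [CommRing R] [Algebra S R]
    (P : PoissonBracket S R)
    (M : ℕ) (hM : 1 ≤ M) (L : ℕ) (hL : L = M / 2)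
    (A B C : R) (hC : P.br A B = C)
    (α lam : ℕ → S) (δ ε β ζ : S)
    (hAC : P.br A C =
      ∑ i ∈ Finset.Icc 1 (L + 1), α i • A ^ i + δ • B + ε • (1 : R) + (2 * β) • (A * B))
    (hBC : P.br B C =
      ∑ i ∈ Finset.Icc 1 M, lam i • A ^ i - β • B ^ 2 - α 1 • B
        - ∑ i ∈ Finset.Icc 1 L, (((i : S) + 1) * α (i + 1)) • (A ^ i * B) + ζ • (1 : R))
    (K : R)
    (hK : K = C ^ 2 - ∑ i ∈ Finset.Icc 1 (L + 1), (2 * α i) • (A ^ i * B)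
      - (2 * β) • (A * B ^ 2) + (2 * ζ) • A
      + ∑ i ∈ Finset.Icc 1 M, ((2 / ((i : ℚ) + 1)) • lam i) • A ^ (i + 1)
      - (2 * ε) • B - δ • B ^ 2) :
    P.br K A = 0 ∧ P.br K B = 0 :=
  stmt16_general P M L A B C hC α lam δ ε β ζ hAC hBC K hK
end
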